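/- arXiv:2309.14848 — 7 statements merged into one kernel-verified Lean document; each statement's English description precedes it below -/
import Mathlib

section
/- Let n ≥ 1 and let K be a proper simplicial complex on [n] without ghost vertices. Then K is a threshold complex if and only if K admits a K-submodular function. (This is the combinatorial form of the paper's Theorem 1.1: by the K-submodularity criterion, existence of a K-submodular function is equivalent to polytopality of the canonical fan Fan(K) of the Bier sphere Bier(K).) -/
/-!
With `w = x + y` and `Y = ∑ y`, the Λ-, V- and X-inequalities of a ridge datum
`[n] = X₁ ⊔ {c₁, c₂} ⊔ X₂` read `Y < w(X₁ ∪ {c₁, c₂})`, `w(X₁) < Y` and `0 < w(c₂)`. So a threshold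
presentation with a strict gap `w(face) < Q < w(nonface)` yields the K-submodular pair
`x = w - Q/n`, `y = Q/n`, and conversely one shows that `w` with quota `Y` is a threshold
presentation, by induction on the ground set. A ghost vertex is simply deleted; a vertex `b` with
`[n] ∖ {b} ∈ K` is removed by passing to its link, with quota `Y - w(b)`, and gets a large weight
back. Without either, consider the linear pieces `facetFun` of the support function on the cones
of the fan of the Bier sphere: the ridge inequalities say that crossing a wall of a cone towards
`v` strictly increases the value at `v`, so at `v = ∓ e_b` the maximum over all facets is attained
only at facets whose cone contains `v`. Evaluating at those vectors shows that every Bier facet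
`(A, c)` (`A ∈ K`, `A ∪ {c} ∉ K`) has `w > 0` on `A` and `w(A) < Y < w(A ∪ {c})`; since faces lie
below and nonfaces above such facets, this separates `K` from its complement.
-/

open Finset

/-- A simplicial complex on `[n]`: a family of subsets containing `∅` and
closed under taking subsets. -/
def IsComplex (n : ℕ) (K : Set (Finset (Fin n))) : Prop :=
  ∅ ∈ K ∧ ∀ A B : Finset (Fin n), A ⊆ B → B ∈ K → A ∈ K

/-- No ghost vertices: every singleton is a face. -/
def NoGhost (n : ℕ) (K : Set (Finset (Fin n))) : Prop :=
  ∀ i : Fin n, ({i} : Finset (Fin n)) ∈ K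

/-- `K` is a threshold complex: there are strictly positive weights `w` and a
quota `q` with `A ∈ K ↔ w(A) < q`. -/
def IsThreshold (n : ℕ) (K : Set (Finset (Fin n))) : Prop :=
  ∃ (w : Fin n → ℝ) (q : ℝ), (∀ i, 0 < w i) ∧
    ∀ A : Finset (Fin n), A ∈ K ↔ ∑ i ∈ A, w i < q

/-- A K-submodular function: a pair of vectors `x y : [n] → ℝ` satisfying, for
every ridge datum `[n] = X1 ⊔ {c1,c2} ⊔ X2` (so `X2 = (X1 ∪ {c1,c2})ᶜ`) with
`X1 ∈ K` and `X2 ∈ K°` (i.e. `X2ᶜ = X1 ∪ {c1,c2} ∉ K`):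
the Λ-, V- and X-configuration inequalities. -/
def IsKSubmodular (n : ℕ) (K : Set (Finset (Fin n))) (x y : Fin n → ℝ) : Prop :=
  ∀ (X1 : Finset (Fin n)) (c1 c2 : Fin n),
    c1 ≠ c2 → c1 ∉ X1 → c2 ∉ X1 → X1 ∈ K → insert c1 (insert c2 X1) ∉ K →
    ((insert c1 X1 ∈ K → insert c2 X1 ∈ K →
        ∑ i ∈ X1, x i + x c1 + x c2 > ∑ j ∈ (insert c1 (insert c2 X1))ᶜ, y j) ∧
     (insert c1 X1 ∉ K → insert c2 X1 ∉ K →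
        ∑ j ∈ (insert c1 (insert c2 X1))ᶜ, y j + y c1 + y c2 > ∑ i ∈ X1, x i) ∧
     (insert c2 X1 ∈ K → insert c1 X1 ∉ K → x c2 + y c2 > 0))

/-- A non-strict K-submodular function: the Λ- and V-inequalities are non-strict,
and for X-configurations with distinguished element `c2` one requires
`x c2 > 0` and `y c2 > 0`. -/
def IsNonStrictKSubmodular (n : ℕ) (K : Set (Finset (Fin n))) (x y : Fin n → ℝ) : Prop :=
  ∀ (X1 : Finset (Fin n)) (c1 c2 : Fin n),
    c1 ≠ c2 → c1 ∉ X1 → c2 ∉ X1 → X1 ∈ K → insert c1 (insert c2 X1) ∉ K →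
    ((insert c1 X1 ∈ K → insert c2 X1 ∈ K →
        ∑ i ∈ X1, x i + x c1 + x c2 ≥ ∑ j ∈ (insert c1 (insert c2 X1))ᶜ, y j) ∧
     (insert c1 X1 ∉ K → insert c2 X1 ∉ K →
        ∑ j ∈ (insert c1 (insert c2 X1))ᶜ, y j + y c1 + y c2 ≥ ∑ i ∈ X1, x i) ∧
     (insert c2 X1 ∈ K → insert c1 X1 ∉ K → 0 < x c2 ∧ 0 < y c2))

/-- `K` (the set of losing coalitions) is roughly weighted with strictly positive
weights `w` and quota `q > 0`. -/
def RoughlyWeighted (n : ℕ) (K : Set (Finset (Fin n))) (w : Fin n → ℝ) (q : ℝ) : Prop :=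
  (∀ i, 0 < w i) ∧ 0 < q ∧ ∀ X : Finset (Fin n),
    (q < ∑ i ∈ X, w i → X ∉ K) ∧ (∑ i ∈ X, w i < q → X ∈ K)

namespace BierSphere

variable {α : Type*} {E : Finset α} {K : Set (Finset α)} {w : α → ℝ} {Y : ℝ}

structure IsComplexOn (E : Finset α) (K : Set (Finset α)) : Prop where
  empty_mem : ∅ ∈ K
  subset_of_mem : ∀ A ∈ K, A ⊆ E
  isLowerSet : IsLowerSet K

def IsThresholdOn (E : Finset α) (K : Set (Finset α)) : Prop :=
  ∃ (w : α → ℝ) (q : ℝ), (∀ i ∈ E, 0 < w i) ∧ ∀ A ⊆ E, A ∈ K ↔ ∑ i ∈ A, w i < q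

theorem isThresholdOn_of_mem (hK : IsLowerSet K) (hE : E ∈ K) : IsThresholdOn E K := by
  refine ⟨fun _ => 1, #E + 1, fun _ _ => one_pos, fun A hA => iff_of_true (hK hA hE) ?_⟩
  have : (#A : ℝ) ≤ #E := by exact_mod_cast card_le_card hA
  simp only [sum_const, nsmul_eq_mul, mul_one]
  linarith

def MemFacetCone (E A : Finset α) (c : α) (v : α → ℝ) : Prop :=
  (∀ a ∈ A, v c ≤ v a) ∧ ∀ j ∈ E, j ∉ A → v j ≤ v c

/-- On the cone `MemFacetCone E A c`, the support function of the fan of the Bier sphere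
attached to a pair `(x, y)` is
`v ↦ ∑_{j ∈ A} x j (v j - v c) + ∑_{j ∈ E \ (A ∪ {c})} y j (v c - v j)`;
adding the linear function `v ↦ ∑_{j ∈ E} y j v j` turns it into
`facetFun (x + y) (∑_{j ∈ E} y j) A c`. -/
def facetFun (w : α → ℝ) (Y : ℝ) (A : Finset α) (c : α) (v : α → ℝ) : ℝ :=
  ∑ j ∈ A, w j * (v j - v c) + Y * v c

theorem facetFun_apex (A : Finset α) (c c' : α) (v : α → ℝ) :
    facetFun w Y A c' v = facetFun w Y A c v + (∑ j ∈ A, w j - Y) * (v c - v c') := by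
  have h : ∀ j, w j * (v j - v c') = w j * (v j - v c) + w j * (v c - v c') := fun j => by ring
  simp only [facetFun, h, sum_add_distrib, ← sum_mul]
  ring

variable [DecidableEq α]

def IsSubmodularOn (E : Finset α) (K : Set (Finset α)) (w : α → ℝ) (Y : ℝ) : Prop :=
  ∀ (X : Finset α) (c₁ c₂ : α), c₁ ∈ E → c₂ ∈ E → c₁ ≠ c₂ → c₁ ∉ X → c₂ ∉ X → X ∈ K →
    insert c₁ (insert c₂ X) ∉ K →
    (insert c₁ X ∈ K → insert c₂ X ∈ K → Y < ∑ i ∈ insert c₁ (insert c₂ X), w i) ∧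
    (insert c₁ X ∉ K → insert c₂ X ∉ K → ∑ i ∈ X, w i < Y) ∧
    (insert c₂ X ∈ K → insert c₁ X ∉ K → 0 < w c₂)

theorem IsSubmodularOn.lt_of_lambda (hw : IsSubmodularOn E K w Y) (hK : IsComplexOn E K)
    {X : Finset α} {c₁ c₂ : α} (h₁ : insert c₁ X ∈ K) (h₂ : insert c₂ X ∈ K)
    (hF : insert c₁ (insert c₂ X) ∉ K) : Y < ∑ i ∈ insert c₁ (insert c₂ X), w i := by
  have hc₁ : c₁ ∉ insert c₂ X := fun h => hF (by rwa [insert_eq_of_mem h])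
  have hc₂ : c₂ ∉ insert c₁ X := fun h => hF (by rwa [insert_comm, insert_eq_of_mem h])
  exact (hw X c₁ c₂ (hK.subset_of_mem _ h₁ (mem_insert_self _ _))
    (hK.subset_of_mem _ h₂ (mem_insert_self _ _)) (fun h => hc₁ (h ▸ mem_insert_self _ _))
    (fun h => hc₁ (mem_insert_of_mem h)) (fun h => hc₂ (mem_insert_of_mem h))
    (hK.isLowerSet (subset_insert _ _) h₁) hF).1 h₁ h₂

theorem IsSubmodularOn.lt_of_vee (hw : IsSubmodularOn E K w Y) (hK : IsComplexOn E K)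
    {X : Finset α} {c₁ c₂ : α} (hc₁ : c₁ ∈ E) (hc₂ : c₂ ∈ E) (hne : c₁ ≠ c₂) (hX : X ∈ K)
    (h₁ : insert c₁ X ∉ K) (h₂ : insert c₂ X ∉ K) : ∑ i ∈ X, w i < Y :=
  (hw X c₁ c₂ hc₁ hc₂ hne (fun h => h₁ (by rwa [insert_eq_of_mem h]))
    (fun h => h₂ (by rwa [insert_eq_of_mem h])) hX
    (fun h => h₁ (hK.isLowerSet (insert_subset_insert _ (subset_insert _ _)) h))).2.1 h₁ h₂

theorem IsSubmodularOn.pos_of_cross (hw : IsSubmodularOn E K w Y) (hK : IsComplexOn E K)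
    {X : Finset α} {c₁ c₂ : α} (hc₁ : c₁ ∈ E) (hc₂X : c₂ ∉ X) (h₂ : insert c₂ X ∈ K)
    (h₁ : insert c₁ X ∉ K) : 0 < w c₂ := by
  have hX : X ∈ K := hK.isLowerSet (subset_insert _ _) h₂
  have hc₁X : c₁ ∉ X := fun h => h₁ (by rwa [insert_eq_of_mem h])
  refine (hw X c₁ c₂ hc₁ (hK.subset_of_mem _ h₂ (mem_insert_self _ _)) ?_ hc₁X hc₂X hX
    ?_).2.2 h₂ h₁
  · rintro rfl
    exact h₁ h₂
  · exact fun h => h₁ (hK.isLowerSet (insert_subset_insert _ (subset_insert _ _)) h)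

/-- The facet `A ⊔ (E \ (A ∪ {c}))*` of the Bier sphere of `K`. -/
structure IsBierFacet (E : Finset α) (K : Set (Finset α)) (A : Finset α) (c : α) : Prop where
  mem : A ∈ K
  apex_mem : c ∈ E
  apex_not_mem : c ∉ A
  insert_not_mem : insert c A ∉ K

theorem facetFun_insert {A : Finset α} {a : α} (ha : a ∉ A) (c : α) (v : α → ℝ) :
    facetFun w Y (insert a A) c v = facetFun w Y A c v + w a * (v a - v c) := by
  rw [facetFun, facetFun, sum_insert ha]
  ring

theorem exists_facetFun_lt_of_lt_apex (hK : IsComplexOn E K) (hw : IsSubmodularOn E K w Y)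
    {A : Finset α} {c a : α} (hf : IsBierFacet E K A c) (ha : a ∈ A) {v : α → ℝ}
    (hv : v a < v c) :
    ∃ A' c', IsBierFacet E K A' c' ∧ facetFun w Y A c v < facetFun w Y A' c' v := by
  set X := A.erase a
  have hac : a ≠ c := fun h => hf.apex_not_mem (h ▸ ha)
  have haX : a ∉ X := notMem_erase a A
  have hcX : c ∉ X := fun h => hf.apex_not_mem (mem_of_mem_erase h)
  have hA : insert a X = A := insert_erase ha
  have hF : insert c (insert a X) ∉ K := hA ▸ hf.insert_not_mem
  have hval : facetFun w Y A c v = facetFun w Y X c v + w a * (v a - v c) := by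
    rw [← facetFun_insert haX, hA]
  by_cases hcK : insert c X ∈ K
  · have hΛ := hw.lt_of_lambda hK hcK (hA ▸ hf.mem) hF
    refine ⟨insert c X, a, ⟨hcK, hK.subset_of_mem _ hf.mem ha, ?_, by rwa [insert_comm]⟩, ?_⟩
    · simp [haX, hac]
    rw [sum_insert (by simp [hcX, hac.symm]), sum_insert haX] at hΛ
    rw [hval, facetFun_insert hcX, facetFun_apex X c a]
    nlinarith [mul_pos (sub_pos.2 hv) (sub_pos.2 hΛ)]
  · have hX := hw.pos_of_cross hK hf.apex_mem haX (hA ▸ hf.mem) hcK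
    refine ⟨X, c, ⟨hK.isLowerSet (erase_subset a A) hf.mem, hf.apex_mem, hcX, hcK⟩, ?_⟩
    rw [hval]
    nlinarith [mul_pos hX (sub_pos.2 hv)]

theorem exists_facetFun_lt_of_apex_lt (hK : IsComplexOn E K) (hw : IsSubmodularOn E K w Y)
    {A : Finset α} {c j : α} (hf : IsBierFacet E K A c) (hj : j ∈ E) (hjA : j ∉ A)
    {v : α → ℝ} (hv : v c < v j) :
    ∃ A' c', IsBierFacet E K A' c' ∧ facetFun w Y A c v < facetFun w Y A' c' v := by
  have hjc : j ≠ c := by rintro rfl; exact lt_irrefl _ hv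
  by_cases hjK : insert j A ∈ K
  · have hX := hw.pos_of_cross hK hf.apex_mem hjA hjK hf.insert_not_mem
    refine ⟨insert j A, c, ⟨hjK, hf.apex_mem, by simp [hjc.symm, hf.apex_not_mem], fun h =>
      hf.insert_not_mem (hK.isLowerSet (insert_subset_insert _ (subset_insert _ _)) h)⟩, ?_⟩
    rw [facetFun_insert hjA]
    nlinarith [mul_pos hX (sub_pos.2 hv)]
  · have hV := hw.lt_of_vee hK hf.apex_mem hj hjc.symm hf.mem hf.insert_not_mem hjK
    refine ⟨A, j, ⟨hf.mem, hj, hjA, hjK⟩, ?_⟩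
    rw [facetFun_apex A c j]
    nlinarith [mul_pos (sub_pos.2 hV) (sub_pos.2 hv)]

theorem exists_facetFun_lt_of_not_memFacetCone (hK : IsComplexOn E K)
    (hw : IsSubmodularOn E K w Y) {A : Finset α} {c : α} (hf : IsBierFacet E K A c)
    {v : α → ℝ} (hv : ¬ MemFacetCone E A c v) :
    ∃ A' c', IsBierFacet E K A' c' ∧ facetFun w Y A c v < facetFun w Y A' c' v := by
  simp only [MemFacetCone, not_and_or, not_forall, not_le] at hv
  rcases hv with ⟨a, ha, hlt⟩ | ⟨j, hj, hjA, hlt⟩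
  · exact exists_facetFun_lt_of_lt_apex hK hw hf ha hlt
  · exact exists_facetFun_lt_of_apex_lt hK hw hf hj hjA hlt

theorem exists_isBierFacet_between {A₀ S : Finset α} (hA₀ : A₀ ∈ K) (hA₀S : A₀ ⊆ S)
    (hSE : S ⊆ E) (hS : S ∉ K) :
    ∃ A c, A₀ ⊆ A ∧ insert c A ⊆ S ∧ IsBierFacet E K A c := by
  have hfin : {A | A ⊆ S ∧ A ∈ K}.Finite :=
    S.powerset.finite_toSet.subset fun A hA => mem_powerset.2 hA.1
  obtain ⟨A, hA₀A, ⟨hAS, hAK⟩, hmax⟩ := hfin.exists_le_maximal ⟨hA₀S, hA₀⟩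
  obtain ⟨c, hcS, hcA⟩ :=
    exists_of_ssubset (ssubset_of_subset_of_ne hAS (by rintro rfl; exact hS hAK))
  refine ⟨A, c, hA₀A, insert_subset hcS hAS, hAK, hSE hcS, hcA, fun hcK => hcA ?_⟩
  exact hmax ⟨insert_subset hcS hAS, hcK⟩ (subset_insert c A) (mem_insert_self c A)

theorem exists_isBierFacet_forall_facetFun_le (hK : IsComplexOn E K) (hE : E ∉ K) (v : α → ℝ) :
    ∃ A c, IsBierFacet E K A c ∧
      ∀ A' c', IsBierFacet E K A' c' → facetFun w Y A' c' v ≤ facetFun w Y A c v := by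
  have hfin : {p : Finset α × α | IsBierFacet E K p.1 p.2}.Finite :=
    (E.powerset ×ˢ E).finite_toSet.subset fun p hp =>
      mem_product.2 ⟨mem_powerset.2 (hK.subset_of_mem _ hp.mem), hp.apex_mem⟩
  obtain ⟨A, c, -, -, hf⟩ := exists_isBierFacet_between hK.empty_mem (empty_subset E) subset_rfl hE
  obtain ⟨p, hp, hmax⟩ := Set.exists_max_image _ (fun p => facetFun w Y p.1 p.2 v) hfin ⟨(A, c), hf⟩
  exact ⟨p.1, p.2, hp, fun A' c' hf' => hmax (A', c') hf'⟩

/-- From a facet whose cone misses `v` one can cross a wall and increase `facetFun · · v`, so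
the maximum over all facets is attained at a facet whose cone contains `v`. -/
theorem facetFun_lt_of_not_memFacetCone (hK : IsComplexOn E K) (hw : IsSubmodularOn E K w Y)
    (hE : E ∉ K) {v : α → ℝ} {μ : ℝ}
    (hμ : ∀ A c, IsBierFacet E K A c → MemFacetCone E A c v → facetFun w Y A c v ≤ μ)
    {A : Finset α} {c : α} (hf : IsBierFacet E K A c) (hv : ¬ MemFacetCone E A c v) :
    facetFun w Y A c v < μ := by
  obtain ⟨A₀, c₀, hf₀, hmax⟩ := exists_isBierFacet_forall_facetFun_le (w := w) (Y := Y) hK hE v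
  have hv₀ : MemFacetCone E A₀ c₀ v := by
    by_contra hv₀
    obtain ⟨A', c', hf', hlt⟩ := exists_facetFun_lt_of_not_memFacetCone hK hw hf₀ hv₀
    exact not_lt.2 (hmax A' c' hf') hlt
  obtain ⟨A', c', hf', hlt⟩ := exists_facetFun_lt_of_not_memFacetCone hK hw hf hv
  exact hlt.trans_le ((hmax A' c' hf').trans (hμ A₀ c₀ hf₀ hv₀))

section Separation

theorem facetFun_single_of_ne {c b : α} (hcb : c ≠ b) (A : Finset α) (t : ℝ) :
    facetFun w Y A c (Pi.single b t) = if b ∈ A then w b * t else 0 := by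
  simp [facetFun, Pi.single_apply, hcb, mul_ite]

theorem facetFun_single_self {A : Finset α} {b : α} (hb : b ∉ A) (t : ℝ) :
    facetFun w Y A b (Pi.single b t) = (Y - ∑ j ∈ A, w j) * t := by
  have h : ∀ j ∈ A, w j * ((Pi.single b t : α → ℝ) j - (Pi.single b t : α → ℝ) b) = -(w j * t) :=
    fun j hj => by simp [ne_of_mem_of_not_mem hj hb]
  rw [facetFun, sum_congr rfl h, sum_neg_distrib, ← sum_mul, Pi.single_eq_same]
  ring

theorem IsBierFacet.exists_not_mem (hK : IsComplexOn E K) {A : Finset α} {c : α}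
    (hf : IsBierFacet E K A c) (hco : E.erase c ∉ K) : ∃ j ∈ E, j ∉ insert c A := by
  by_contra! h
  refine hco (hK.isLowerSet (fun j hj => ?_) hf.mem)
  exact (mem_insert.1 (h j (mem_of_mem_erase hj))).resolve_left (ne_of_mem_erase hj)

theorem IsBierFacet.nonempty {A : Finset α} {c : α} (hf : IsBierFacet E K A c)
    (hc : {c} ∈ K) : A.Nonempty := by
  rw [nonempty_iff_ne_empty]
  rintro rfl
  exact hf.insert_not_mem hc

variable (hK : IsComplexOn E K) (hw : IsSubmodularOn E K w Y) (hE : E ∉ K)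
include hK hw hE

theorem facetFun_single_neg_one_neg (hco : ∀ b ∈ E, E.erase b ∉ K) {A : Finset α} {c b : α}
    (hf : IsBierFacet E K A c) (hb : b ∈ insert c A) :
    facetFun w Y A c (Pi.single b (-1)) < 0 := by
  refine facetFun_lt_of_not_memFacetCone hK hw hE (fun A' c' hf' hv' => ?_) hf ?_
  · by_cases hc' : c' = b
    · subst hc'
      obtain ⟨j, hj, hjA'⟩ := hf'.exists_not_mem hK (hco c' hf'.apex_mem)
      have := hv'.2 j hj (fun h => hjA' (mem_insert_of_mem h))
      norm_num [(ne_of_mem_of_not_mem (mem_insert_self c' A') hjA').symm] at this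
    rw [facetFun_single_of_ne hc']
    split_ifs with hbA'
    · have := hv'.1 b hbA'
      norm_num [hc'] at this
    · exact le_rfl
  · rintro hv
    rcases mem_insert.1 hb with rfl | hbA
    · obtain ⟨j, hj, hjA⟩ := hf.exists_not_mem hK (hco b hf.apex_mem)
      have := hv.2 j hj (fun h => hjA (mem_insert_of_mem h))
      norm_num [(ne_of_mem_of_not_mem (mem_insert_self b A) hjA).symm] at this
    · have := hv.1 b hbA
      norm_num [ne_of_mem_of_not_mem hbA hf.apex_not_mem |>.symm] at this

theorem pos_of_mem_isBierFacet (hco : ∀ b ∈ E, E.erase b ∉ K) {A : Finset α} {c b : α}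
    (hf : IsBierFacet E K A c) (hb : b ∈ A) : 0 < w b := by
  have := facetFun_single_neg_one_neg hK hw hE hco hf (mem_insert_of_mem hb)
  rw [facetFun_single_of_ne (ne_of_mem_of_not_mem hb hf.apex_not_mem).symm, if_pos hb] at this
  linarith

theorem sum_lt_of_isBierFacet (hco : ∀ b ∈ E, E.erase b ∉ K) {A : Finset α} {c : α}
    (hf : IsBierFacet E K A c) : ∑ j ∈ A, w j < Y := by
  have := facetFun_single_neg_one_neg hK hw hE hco hf (mem_insert_self c A)
  rw [facetFun_single_self hf.apex_not_mem] at this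
  linarith

theorem lt_sum_insert_of_isBierFacet (hgh : ∀ b ∈ E, {b} ∈ K) {A : Finset α} {c : α}
    (hf : IsBierFacet E K A c) : Y < ∑ j ∈ insert c A, w j := by
  suffices facetFun w Y A c (Pi.single c 1) < w c by
    rw [facetFun_single_self hf.apex_not_mem] at this
    rw [sum_insert hf.apex_not_mem]
    linarith
  refine facetFun_lt_of_not_memFacetCone hK hw hE (fun A' c' hf' hv' => ?_) hf ?_
  · by_cases hc' : c' = c
    · subst hc'
      obtain ⟨a, ha⟩ := hf'.nonempty (hgh c' hf'.apex_mem)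
      have := hv'.1 a ha
      norm_num [ne_of_mem_of_not_mem ha hf'.apex_not_mem] at this
    rw [facetFun_single_of_ne hc']
    split_ifs with hcA'
    · rw [mul_one]
    · have := hv'.2 c hf.apex_mem hcA'
      norm_num [hc'] at this
  · rintro hv
    obtain ⟨a, ha⟩ := hf.nonempty (hgh c hf.apex_mem)
    have := hv.1 a ha
    norm_num [ne_of_mem_of_not_mem ha hf.apex_not_mem] at this

theorem pos_of_mem (hgh : ∀ b ∈ E, {b} ∈ K) (hco : ∀ b ∈ E, E.erase b ∉ K) {b : α}
    (hb : b ∈ E) : 0 < w b := by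
  obtain ⟨A, c, hbA, -, hf⟩ :=
    exists_isBierFacet_between (hgh b hb) (singleton_subset_iff.2 hb) subset_rfl hE
  exact pos_of_mem_isBierFacet hK hw hE hco hf (singleton_subset_iff.1 hbA)

theorem mem_iff_sum_lt (hgh : ∀ b ∈ E, {b} ∈ K) (hco : ∀ b ∈ E, E.erase b ∉ K) {S : Finset α}
    (hS : S ⊆ E) : S ∈ K ↔ ∑ j ∈ S, w j < Y := by
  have hpos : ∀ j ∈ E, 0 ≤ w j := fun j hj => (pos_of_mem hK hw hE hgh hco hj).le
  constructor
  · intro hSK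
    obtain ⟨A, c, hSA, -, hf⟩ := exists_isBierFacet_between hSK hS subset_rfl hE
    calc ∑ j ∈ S, w j ≤ ∑ j ∈ A, w j :=
          sum_le_sum_of_subset_of_nonneg hSA fun j hj _ => hpos j (hK.subset_of_mem A hf.mem hj)
      _ < Y := sum_lt_of_isBierFacet hK hw hE hco hf
  · intro hlt
    by_contra hSK
    obtain ⟨A, c, -, hAS, hf⟩ := exists_isBierFacet_between hK.empty_mem (empty_subset S) hS hSK
    have := calc Y < ∑ j ∈ insert c A, w j := lt_sum_insert_of_isBierFacet hK hw hE hgh hf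
      _ ≤ ∑ j ∈ S, w j := sum_le_sum_of_subset_of_nonneg hAS fun j hj _ => hpos j (hS hj)
    linarith

end Separation

def link (K : Set (Finset α)) (b : α) : Set (Finset α) :=
  {A | b ∉ A ∧ insert b A ∈ K}

theorem mem_link {b : α} {A : Finset α} (hb : b ∉ A) : A ∈ link K b ↔ insert b A ∈ K :=
  and_iff_right hb

theorem IsSubmodularOn.mono {E' : Finset α} (hw : IsSubmodularOn E K w Y) (h : E' ⊆ E) :
    IsSubmodularOn E' K w Y :=
  fun X c₁ c₂ hc₁ hc₂ => hw X c₁ c₂ (h hc₁) (h hc₂)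

theorem IsComplexOn.erase (hK : IsComplexOn E K) {i : α} (hi : {i} ∉ K) :
    IsComplexOn (E.erase i) K where
  empty_mem := hK.empty_mem
  subset_of_mem A hA := subset_erase.2
    ⟨hK.subset_of_mem A hA, fun hiA => hi (hK.isLowerSet (singleton_subset_iff.2 hiA) hA)⟩
  isLowerSet := hK.isLowerSet

theorem IsThresholdOn.of_erase (hK : IsLowerSet K) {i : α} (hi : {i} ∉ K)
    (h : IsThresholdOn (E.erase i) K) : IsThresholdOn E K := by
  obtain ⟨w, q, hw, hq⟩ := h
  refine ⟨Function.update w i (|q| + 1), q, fun j hj => ?_, fun A hA => ?_⟩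
  · rcases eq_or_ne j i with rfl | hji
    · simp only [Function.update_self]
      positivity
    · rw [Function.update_of_ne hji]
      exact hw j (mem_erase.2 ⟨hji, hj⟩)
  by_cases hiA : i ∈ A
  · refine iff_of_false (fun hAK => hi (hK (singleton_subset_iff.2 hiA) hAK)) (not_lt.2 ?_)
    have : 0 ≤ ∑ j ∈ A \ {i}, w j := sum_nonneg fun j hj => (hw j (by
      rw [← sdiff_singleton_eq_erase]; exact sdiff_subset_sdiff hA subset_rfl hj)).le
    rw [sum_update_of_mem hiA]
    linarith [le_abs_self q]
  · rw [sum_update_of_notMem hiA]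
    exact hq A (subset_erase.2 ⟨hA, hiA⟩)

theorem IsComplexOn.link (hK : IsComplexOn E K) {b : α} (hb : {b} ∈ K) :
    IsComplexOn (E.erase b) (link K b) where
  empty_mem := ⟨notMem_empty b, hb⟩
  subset_of_mem A hA := subset_erase.2
    ⟨(subset_insert b A).trans (hK.subset_of_mem _ hA.2), hA.1⟩
  isLowerSet _ _ hBA hA :=
    ⟨fun h => hA.1 (hBA h), hK.isLowerSet (insert_subset_insert b hBA) hA.2⟩

theorem IsSubmodularOn.link (hw : IsSubmodularOn E K w Y) {b : α} :
    IsSubmodularOn (E.erase b) (link K b) w (Y - w b) := by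
  intro X c₁ c₂ hc₁ hc₂ hne h₁ h₂ hX hF
  have hb₁ := ne_of_mem_erase hc₁
  have hb₂ := ne_of_mem_erase hc₂
  have hbX₁ : b ∉ insert c₁ X := by simp [hb₁.symm, hX.1]
  have hbX₂ : b ∉ insert c₂ X := by simp [hb₂.symm, hX.1]
  have hbF : b ∉ insert c₁ (insert c₂ X) := by simp [hb₁.symm, hb₂.symm, hX.1]
  have hF' : insert c₁ (insert c₂ (insert b X)) = insert b (insert c₁ (insert c₂ X)) := by
    rw [insert_comm c₂ b, insert_comm c₁ b]
  rw [mem_link hbF, ← hF'] at hF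
  obtain ⟨hΛ, hV, hX'⟩ := hw (insert b X) c₁ c₂ (mem_of_mem_erase hc₁) (mem_of_mem_erase hc₂)
    hne (by simp [hb₁, h₁]) (by simp [hb₂, h₂]) hX.2 hF
  simp only [mem_link hbX₁, mem_link hbX₂, insert_comm b] at hΛ hV hX' ⊢
  rw [hF', sum_insert hbF] at hΛ
  rw [sum_insert hX.1] at hV
  exact ⟨fun p₁ p₂ => by linarith [hΛ p₁ p₂], fun p₁ p₂ => by linarith [hV p₁ p₂], hX'⟩

theorem IsThresholdOn.of_link (hK : IsLowerSet K) {b : α} (hb : b ∈ E) (hE : E ∉ K)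
    (hEb : E.erase b ∈ K) (h : IsThresholdOn (E.erase b) (link K b)) : IsThresholdOn E K := by
  obtain ⟨w, q, hw, hq⟩ := h
  set W := ∑ j ∈ E.erase b, w j
  have hqW : q ≤ W := not_lt.1 fun hlt =>
    hE (by simpa [insert_erase hb] using ((hq _ subset_rfl).2 hlt).2)
  refine ⟨Function.update w b (W - q + 1), W + 1, fun j hj => ?_, fun A hA => ?_⟩
  · rcases eq_or_ne j b with rfl | hjb
    · simp only [Function.update_self]
      linarith
    · rw [Function.update_of_ne hjb]
      exact hw j (mem_erase.2 ⟨hjb, hj⟩)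
  by_cases hbA : b ∈ A
  · have hAb : A.erase b ⊆ E.erase b := erase_subset_erase b hA
    have hmem : A ∈ K ↔ A.erase b ∈ link K b := by
      rw [mem_link (notMem_erase b A), insert_erase hbA]
    rw [hmem, hq _ hAb, sum_update_of_mem hbA, sdiff_singleton_eq_erase]
    constructor <;> intro <;> linarith
  · have hAb : A ⊆ E.erase b := subset_erase.2 ⟨hA, hbA⟩
    refine iff_of_true (hK hAb hEb) ?_
    rw [sum_update_of_notMem hbA]
    have : ∑ j ∈ A, w j ≤ W := sum_le_sum_of_subset_of_nonneg hAb fun j hj _ => (hw j hj).le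
    linarith

theorem IsSubmodularOn.isThresholdOn (hK : IsComplexOn E K) (hw : IsSubmodularOn E K w Y) :
    IsThresholdOn E K := by
  induction E using Finset.strongInduction generalizing K Y with
  | H E ih =>
  by_cases hE : E ∈ K
  · exact isThresholdOn_of_mem hK.isLowerSet hE
  by_cases hgh : ∃ i ∈ E, {i} ∉ K
  · obtain ⟨i, hi, hiK⟩ := hgh
    exact (ih _ (erase_ssubset hi) (hK.erase hiK) (hw.mono (erase_subset i E))).of_erase
      hK.isLowerSet hiK
  by_cases hco : ∃ b ∈ E, E.erase b ∈ K
  · obtain ⟨b, hb, hbK⟩ := hco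
    push Not at hgh
    exact (ih _ (erase_ssubset hb) (hK.link (hgh b hb)) hw.link).of_link hK.isLowerSet hb hE hbK
  push Not at hgh hco
  exact ⟨w, Y, fun b hb => pos_of_mem hK hw hE hgh hco hb,
    fun S hS => mem_iff_sum_lt hK hw hE hgh hco hS⟩

theorem isKSubmodular_iff {n : ℕ} {K : Set (Finset (Fin n))} {x y : Fin n → ℝ} :
    IsKSubmodular n K x y ↔ IsSubmodularOn univ K (x + y) (∑ i, y i) := by
  refine forall_congr' fun X => forall₂_congr fun c₁ c₂ => ?_
  simp only [mem_univ, true_implies]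
  refine imp_congr_right fun hne => imp_congr_right fun h₁ => imp_congr_right fun h₂ =>
    imp_congr_right fun _ => imp_congr_right fun _ => ?_
  have hc : c₁ ∉ insert c₂ X := by simp [hne, h₁]
  have hsplit := sum_compl_add_sum (insert c₁ (insert c₂ X)) y
  simp only [Pi.add_apply, sum_add_distrib, sum_insert hc, sum_insert h₂] at hsplit ⊢
  constructor
  · rintro ⟨hΛ, hV, hX⟩
    exact ⟨fun p q => by linarith [hΛ p q], fun p q => by linarith [hV p q], hX⟩
  · rintro ⟨hΛ, hV, hX⟩
    exact ⟨fun p q => by linarith [hΛ p q], fun p q => by linarith [hV p q], hX⟩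

theorem exists_strict_separation {ι : Type*} [Fintype ι] {P : Set ι} {f : ι → ℝ} {q : ℝ}
    (h : ∀ i, i ∈ P ↔ f i < q) : ∃ Q, (∀ i ∈ P, f i < Q) ∧ ∀ i ∉ P, Q < f i := by
  classical
  obtain ⟨Q, hlo, hhi⟩ := Order.exists_between_finsets
    (image f {i | i ∈ P}) (image f {i | i ∉ P}) (by
      simp only [mem_image, mem_filter, mem_univ, true_and]
      rintro _ ⟨i, hi, rfl⟩ _ ⟨j, hj, rfl⟩
      exact ((h i).1 hi).trans_le (not_lt.1 fun hj' => hj ((h j).2 hj')))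
  exact ⟨Q, fun i hi => hlo _ (mem_image_of_mem f (by simpa using hi)),
    fun i hi => hhi _ (mem_image_of_mem f (by simpa using hi))⟩

theorem isSubmodularOn_of_separation {Q : ℝ} (hw : ∀ i ∈ E, 0 < w i)
    (hin : ∀ A ∈ K, ∑ i ∈ A, w i < Q) (hout : ∀ A ∉ K, Q < ∑ i ∈ A, w i) : IsSubmodularOn E K w Q :=
  fun X _ c₂ _ hc₂ _ _ _ hX hF => ⟨fun _ _ => hout _ hF, fun _ _ => hin X hX, fun _ _ => hw c₂ hc₂⟩

theorem _root_.IsThreshold.exists_isKSubmodular {n : ℕ} {K : Set (Finset (Fin n))}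
    (hn : 1 ≤ n) (h : IsThreshold n K) : ∃ x y : Fin n → ℝ, IsKSubmodular n K x y := by
  obtain ⟨w, q, hw, hq⟩ := h
  obtain ⟨Q, hin, hout⟩ := exists_strict_separation (P := K) hq
  refine ⟨w - fun _ => Q / n, fun _ => Q / n, isKSubmodular_iff.2 ?_⟩
  have hY : ∑ _i : Fin n, Q / n = Q := by
    rw [sum_const, card_univ, Fintype.card_fin, nsmul_eq_mul]
    field_simp [show (n : ℝ) ≠ 0 by positivity]
  rw [sub_add_cancel, hY]
  exact isSubmodularOn_of_separation (fun i _ => hw i) hin hout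

end BierSphere

theorem threshold_iff_exists_KSubmodular_general (n : ℕ) (hn : 1 ≤ n)
    (K : Set (Finset (Fin n))) (hK : IsComplex n K) :
    IsThreshold n K ↔ ∃ x y : Fin n → ℝ, IsKSubmodular n K x y := by
  refine ⟨IsThreshold.exists_isKSubmodular hn, fun ⟨x, y, h⟩ => ?_⟩
  have hK' : BierSphere.IsComplexOn univ K :=
    ⟨hK.1, fun A _ => subset_univ A, fun _ _ hBA hA => hK.2 _ _ hBA hA⟩
  obtain ⟨w, q, hw, hq⟩ := (BierSphere.isKSubmodular_iff.1 h).isThresholdOn hK'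
  exact ⟨w, q, fun i => hw i (mem_univ i), fun A => hq A (subset_univ A)⟩

/-- For `n ≥ 1` and a proper simplicial complex `K` on `[n]`
without ghost vertices, `K` is a threshold complex iff `K` admits a
K-submodular function. -/
theorem threshold_iff_exists_KSubmodular (n : ℕ) (hn : 1 ≤ n)
    (K : Set (Finset (Fin n))) (hK : IsComplex n K)
    (hproper : K ≠ Set.univ) (hghost : NoGhost n K) :
    IsThreshold n K ↔ ∃ x y : Fin n → ℝ, IsKSubmodular n K x y :=
  threshold_iff_exists_KSubmodular_general n hn K hK
end

section
/- If a proper simplicial complex K on [n] without ghost vertices admits a K-submodular function, then K is a threshold complex. -/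
/-!
Put `w = x + y` and `t = ∑ y`. Then a ridge whose two facets are faces weighs more than `t`, a
face with two non-face one-point extensions weighs less than `t`, and the distinguished vertex
of an X-configuration has positive weight. Induct on the vertex set `U`. If `U \ {c}` is a face,
then `K` consists of the subsets of `U \ {c}` and the joins of `c` with the faces of its link;
the link inherits the conditions with threshold `t - w c`, and a threshold realisation of the
link extends to `K` once `c` outweighs all other vertices together. Otherwise every maximal face
misses two vertices and so weighs less than `t`, every minimal non-face weighs more than `t`,
and all vertex weights are positive, so `(w, t)` itself realises `K`.
-/

open Finset

section

variable {α : Type*} {U : Finset α} {K : Set (Finset α)}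

structure IsComplexOn (U : Finset α) (K : Set (Finset α)) : Prop where
  empty_mem : ∅ ∈ K
  subset_of_mem : ∀ ⦃A⦄, A ∈ K → A ⊆ U
  isLowerSet : IsLowerSet K
  singleton_mem : ∀ ⦃i⦄, i ∈ U → {i} ∈ K

def IsThresholdOn (U : Finset α) (K : Set (Finset α)) : Prop :=
  ∃ (w : α → ℝ) (q : ℝ), (∀ i ∈ U, 0 < w i) ∧ ∀ A ⊆ U, A ∈ K ↔ ∑ i ∈ A, w i < q

theorem isThresholdOn_of_mem (hK : IsLowerSet K) (hU : U ∈ K) : IsThresholdOn U K := by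
  refine ⟨fun _ => 1, U.card + 1, fun _ _ => one_pos, fun A hA => iff_of_true (hK hA hU) ?_⟩
  rw [sum_const, nsmul_one]
  exact_mod_cast Nat.lt_succ_of_le (card_le_card hA)

variable [DecidableEq α] {w : α → ℝ} {t : ℝ}

def link (K : Set (Finset α)) (c : α) : Set (Finset α) := {A | c ∉ A ∧ insert c A ∈ K}

theorem mem_link {K : Set (Finset α)} {c : α} {A : Finset α} :
    A ∈ link K c ↔ c ∉ A ∧ insert c A ∈ K := Iff.rfl

/-- A K-submodular function `(x, y)` matters only through `w = x + y` and `t = ∑ y`, since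
`x(A) - y(Aᶜ) = w(A) - t`. In these terms the Λ-, V- and X-conditions read as below, each
stated without the ridge-datum hypotheses that its other hypotheses imply in a complex. -/
structure IsKSubmodularOn (U : Finset α) (K : Set (Finset α)) (w : α → ℝ) (t : ℝ) : Prop where
  lambda ⦃X : Finset α⦄ ⦃c₁ c₂ : α⦄ : insert c₁ X ∈ K → insert c₂ X ∈ K →
    insert c₁ (insert c₂ X) ∉ K → t < ∑ i ∈ insert c₁ (insert c₂ X), w i
  vee ⦃X : Finset α⦄ ⦃c₁ c₂ : α⦄ : c₁ ∈ U → c₂ ∈ U → c₁ ≠ c₂ → X ∈ K → insert c₁ X ∉ K →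
    insert c₂ X ∉ K → ∑ i ∈ X, w i < t
  cross ⦃X : Finset α⦄ ⦃c₁ c₂ : α⦄ : c₁ ∈ U → c₂ ∉ X → insert c₂ X ∈ K → insert c₁ X ∉ K →
    0 < w c₂

theorem exists_maximal_face {A V : Finset α} (hA : A ∈ K) (hAV : A ⊆ V) :
    ∃ M ∈ K, A ⊆ M ∧ M ⊆ V ∧ ∀ c ∈ V, c ∉ M → insert c M ∉ K := by
  obtain ⟨M, hAM, hM⟩ := Set.Finite.exists_le_maximal (s := {B | B ∈ K ∧ B ⊆ V})
    (V.powerset.finite_toSet.subset fun B hB => mem_powerset.2 hB.2) ⟨hA, hAV⟩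
  refine ⟨M, hM.prop.1, hAM, hM.prop.2, fun c hc hcM hcK => hcM ?_⟩
  exact hM.le_of_ge ⟨hcK, insert_subset hc hM.prop.2⟩ (subset_insert c M) (mem_insert_self c M)

theorem exists_minimal_nonface {A : Finset α} (hA : A ∉ K) :
    ∃ T ⊆ A, T ∉ K ∧ ∀ a ∈ T, T.erase a ∈ K := by
  obtain ⟨T, hTA, hT⟩ := exists_minimal_le_of_wellFoundedLT (· ∉ K) A hA
  refine ⟨T, hTA, hT.prop, fun a ha => by_contra fun h => ?_⟩
  exact notMem_erase a T (hT.le_of_le h (erase_subset a T) ha)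

namespace IsComplexOn

theorem exists_two_notMem (hK : IsComplexOn U K) (hU : U ∉ K)
    (hco : ∀ c ∈ U, U.erase c ∉ K) {M : Finset α} (hM : M ∈ K) :
    ∃ a ∈ U, ∃ b ∈ U, a ≠ b ∧ a ∉ M ∧ b ∉ M := by
  have hMU := hK.subset_of_mem hM
  obtain ⟨a, haU, haM⟩ :=
    exists_of_ssubset (ssubset_of_subset_of_ne hMU (by rintro rfl; exact hU hM))
  obtain ⟨b, hb, hbM⟩ := exists_of_ssubset
    (ssubset_of_subset_of_ne (subset_erase.2 ⟨hMU, haM⟩) (by rintro rfl; exact hco a haU hM))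
  exact ⟨a, haU, b, mem_of_mem_erase hb, (ne_of_mem_erase hb).symm, haM, hbM⟩

theorem exists_link (hK : IsComplexOn U K) {c : α} (hc : c ∈ U) :
    ∃ G ⊆ U.erase c, IsComplexOn G (link K c) := by
  classical
  refine ⟨U.filter fun i => {i} ∈ link K c, fun i hi => ?_, ⟨?_, fun A hA i hi => ?_, ?_, ?_⟩⟩
  · obtain ⟨hiU, hci, -⟩ := mem_filter.1 hi
    exact mem_erase.2 ⟨fun h => hci (mem_singleton.2 h.symm), hiU⟩
  · exact ⟨notMem_empty c, by simpa using hK.singleton_mem hc⟩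
  · refine mem_filter.2 ⟨hK.subset_of_mem hA.2 (mem_insert_of_mem hi), ?_, ?_⟩
    · exact fun h => hA.1 (mem_singleton.1 h ▸ hi)
    · exact hK.isLowerSet (insert_subset_insert c (singleton_subset_iff.2 hi)) hA.2
  · exact fun A B hBA hA =>
      ⟨fun h => hA.1 (hBA h), hK.isLowerSet (insert_subset_insert c hBA) hA.2⟩
  · exact fun i hi => (mem_filter.1 hi).2

end IsComplexOn

namespace IsKSubmodularOn

theorem sum_lt_of_maximal (hw : IsKSubmodularOn U K w t) (hK : IsComplexOn U K) (hU : U ∉ K)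
    (hco : ∀ c ∈ U, U.erase c ∉ K) {M : Finset α} (hM : M ∈ K)
    (hmax : ∀ c ∈ U, c ∉ M → insert c M ∉ K) : ∑ i ∈ M, w i < t := by
  obtain ⟨a, ha, b, hb, hab, haM, hbM⟩ := hK.exists_two_notMem hU hco hM
  exact hw.vee ha hb hab hM (hmax a ha haM) (hmax b hb hbM)

theorem lt_sum_of_minimal (hw : IsKSubmodularOn U K w t) (hK : IsComplexOn U K) {T : Finset α}
    (hTU : T ⊆ U) (hT : T ∉ K) (hmin : ∀ a ∈ T, T.erase a ∈ K) : t < ∑ i ∈ T, w i := by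
  obtain ⟨a, ha⟩ : T.Nonempty := nonempty_iff_ne_empty.2 (by rintro rfl; exact hT hK.empty_mem)
  obtain ⟨b, hb⟩ : (T.erase a).Nonempty := by
    rw [nonempty_iff_ne_empty, Ne, erase_eq_empty_iff]
    rintro (rfl | rfl)
    exacts [notMem_empty a ha, hT (hK.singleton_mem (hTU ha))]
  set X := (T.erase a).erase b
  have hbX : insert b X = T.erase a := insert_erase hb
  have haX : insert a X = T.erase b := by
    rw [show X = (T.erase b).erase a from erase_right_comm,
      insert_erase (mem_erase.2 ⟨(ne_of_mem_erase hb).symm, ha⟩)]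
  have hX : insert a (insert b X) = T := by rw [hbX, insert_erase ha]
  have := hw.lambda (haX ▸ hmin b (mem_of_mem_erase hb)) (hbX ▸ hmin a ha) (hX ▸ hT)
  rwa [hX] at this

theorem weight_pos (hw : IsKSubmodularOn U K w t) (hK : IsComplexOn U K) (hU : U ∉ K)
    (hco : ∀ c ∈ U, U.erase c ∉ K) {m : α} (hm : m ∈ U) : 0 < w m := by
  obtain ⟨M, hMK, hmM, hMU, hMmax⟩ :=
    exists_maximal_face (hK.singleton_mem hm) (singleton_subset_iff.2 hm)
  rw [singleton_subset_iff] at hmM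
  set S := M.erase m
  have hSM : insert m S = M := insert_erase hmM
  have hmS : m ∉ S := notMem_erase m M
  by_cases hX : ∃ c ∈ U, c ∉ M ∧ insert c S ∉ K
  · obtain ⟨c, hc, -, hcS⟩ := hX
    exact hw.cross hc hmS (hSM ▸ hMK) hcS
  push Not at hX
  have hMt := hw.sum_lt_of_maximal hK hU hco hMK hMmax
  have hlt : ∀ c ∈ U, c ∉ M → t < w c + ∑ i ∈ M, w i := fun c hc hcM => by
    have := hw.lambda (hX c hc hcM) (hSM ▸ hMK) (hSM ▸ hMmax c hc hcM)
    rwa [hSM, sum_insert hcM] at this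
  -- Vertices outside `M` have positive weight, so a maximal face `R` with `S ∪ {c} ⊆ R ∌ m`
  -- gives `w(S ∪ {c}) ≤ w(R) < t < w(S ∪ {c, m})`, the middle step a V-configuration at `R`.
  obtain ⟨c, hc, hcM⟩ :=
    exists_of_ssubset (ssubset_of_subset_of_ne hMU (by rintro rfl; exact hU hMK))
  have hcm : c ≠ m := fun h => hcM (h ▸ hmM)
  obtain ⟨R, hRK, hcSR, hRU, hRmax⟩ := exists_maximal_face (hX c hc hcM)
    (insert_subset (mem_erase.2 ⟨hcm, hc⟩) (erase_subset_erase m hMU))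
  obtain ⟨d, hd, hdR⟩ := exists_of_ssubset
    (ssubset_of_subset_of_ne hRU (by rintro rfl; exact hco m hm hRK))
  have hmR : insert m R ∉ K := fun h => hMmax c hc hcM <| hK.isLowerSet
    (by rw [← hSM, insert_comm]; exact insert_subset_insert m hcSR) h
  have hRt : ∑ i ∈ R, w i < t :=
    hw.vee (mem_of_mem_erase hd) hm (ne_of_mem_erase hd) hRK (hRmax d hd hdR) hmR
  have hcSR' : ∑ i ∈ insert c S, w i ≤ ∑ i ∈ R, w i := by
    refine sum_le_sum_of_subset_of_nonneg hcSR fun i hi hiS => ?_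
    have hiM : i ∉ M := by
      rw [← hSM, mem_insert, not_or]
      exact ⟨ne_of_mem_erase (hRU hi), fun h => hiS (mem_insert_of_mem h)⟩
    linarith [hlt i (mem_of_mem_erase (hRU hi)) hiM]
  have hcS : c ∉ S := fun h => hcM (mem_of_mem_erase h)
  have := hlt c hc hcM
  rw [← hSM, sum_insert hmS] at this
  rw [sum_insert hcS] at hcSR'
  linarith

theorem isThresholdOn_of_forall_erase_notMem (hw : IsKSubmodularOn U K w t)
    (hK : IsComplexOn U K) (hU : U ∉ K) (hco : ∀ c ∈ U, U.erase c ∉ K) : IsThresholdOn U K := by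
  have hpos : ∀ i ∈ U, 0 < w i := fun i hi => hw.weight_pos hK hU hco hi
  have hmono : ∀ {A B : Finset α}, A ⊆ B → B ⊆ U → ∑ i ∈ A, w i ≤ ∑ i ∈ B, w i :=
    fun hAB hBU => sum_le_sum_of_subset_of_nonneg hAB fun i hi _ => (hpos i (hBU hi)).le
  refine ⟨w, t, hpos, fun A hAU => ⟨fun hA => ?_, fun hA => by_contra fun hAK => ?_⟩⟩
  · obtain ⟨M, hMK, hAM, hMU, hMmax⟩ := exists_maximal_face hA hAU
    exact (hmono hAM hMU).trans_lt (hw.sum_lt_of_maximal hK hU hco hMK hMmax)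
  · obtain ⟨T, hTA, hTK, hTmin⟩ := exists_minimal_nonface hAK
    have := hw.lt_sum_of_minimal hK (hTA.trans hAU) hTK hTmin
    linarith [hmono hTA hAU]

theorem link (hw : IsKSubmodularOn U K w t) {c : α} {G : Finset α} (hG : G ⊆ U.erase c) :
    IsKSubmodularOn G (link K c) w (t - w c) where
  lambda X c₁ c₂ h₁ h₂ hT := by
    obtain ⟨hc₁, h₁⟩ := mem_link.1 h₁
    obtain ⟨hc₂, h₂⟩ := mem_link.1 h₂
    have hcT : c ∉ insert c₁ (insert c₂ X) := by
      simp only [mem_insert, not_or] at hc₁ hc₂ ⊢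
      exact ⟨hc₁.1, hc₂.1, hc₁.2⟩
    have := hw.lambda (X := insert c X) (c₁ := c₁) (c₂ := c₂) (by rwa [insert_comm])
      (by rwa [insert_comm])
      (by rw [insert_comm c₂ c, insert_comm c₁ c]; exact fun h => hT ⟨hcT, h⟩)
    rw [insert_comm c₂ c, insert_comm c₁ c, sum_insert hcT] at this
    linarith
  vee X c₁ c₂ hc₁ hc₂ hne hX h₁ h₂ := by
    obtain ⟨hcX, hX⟩ := mem_link.1 hX
    obtain ⟨hc₁c, hc₁U⟩ := mem_erase.1 (hG hc₁)
    obtain ⟨hc₂c, hc₂U⟩ := mem_erase.1 (hG hc₂)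
    have := hw.vee hc₁U hc₂U hne hX
      (by rw [insert_comm]; exact fun h => h₁ ⟨by simp [hc₁c.symm, hcX], h⟩)
      (by rw [insert_comm]; exact fun h => h₂ ⟨by simp [hc₂c.symm, hcX], h⟩)
    rw [sum_insert hcX] at this
    linarith
  cross X c₁ c₂ hc₁ hc₂ h₂ h₁ := by
    obtain ⟨hcX, h₂⟩ := mem_link.1 h₂
    obtain ⟨hc₁c, hc₁U⟩ := mem_erase.1 (hG hc₁)
    refine hw.cross hc₁U ?_ (by rwa [insert_comm]) ?_
    · simp only [mem_insert, not_or] at hcX ⊢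
      exact ⟨Ne.symm hcX.1, hc₂⟩
    · rw [insert_comm]
      refine fun h => h₁ ⟨?_, h⟩
      simp only [mem_insert, not_or] at hcX ⊢
      exact ⟨hc₁c.symm, hcX.2⟩

end IsKSubmodularOn

theorem IsThresholdOn.of_link (hK : IsLowerSet K) {c : α} {G : Finset α} (hc : U.erase c ∈ K)
    (hG : IsComplexOn G (link K c)) (hL : IsThresholdOn G (link K c)) : IsThresholdOn U K := by
  obtain ⟨v, q, hv, hvq⟩ := hL
  have hq : 0 < q := by simpa using (hvq ∅ (empty_subset G)).1 hG.empty_mem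
  set u : α → ℝ := fun i => if i ∈ G then v i else q
  have hu : ∀ i ∈ U.erase c, 0 < u i := fun i _ => by
    by_cases h : i ∈ G
    · simpa [u, h] using hv i h
    · simpa [u, h] using hq
  have hcK : ∀ A ⊆ U, c ∈ A → (A ∈ K ↔ ∑ i ∈ A.erase c, u i < q) := by
    intro A hAU hcA
    have hAK : A ∈ K ↔ A.erase c ∈ link K c := by
      rw [mem_link, insert_erase hcA, iff_and_self]
      exact fun _ => notMem_erase c A
    by_cases hAG : A.erase c ⊆ G
    · rw [hAK, hvq _ hAG, sum_congr rfl fun i hi => if_pos (hAG hi)]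
    · obtain ⟨j, hj, hjG⟩ := not_subset.1 hAG
      refine iff_of_false (fun h => hAG (hG.subset_of_mem (hAK.1 h))) (not_lt.2 ?_)
      calc q = u j := (if_neg hjG).symm
        _ ≤ ∑ i ∈ A.erase c, u i :=
          single_le_sum (fun i hi => (hu i (erase_subset_erase c hAU hi)).le) hj
  -- `c` outweighs all of `U \ {c}`, so the faces avoiding `c` stay below the quota.
  set s := ∑ i ∈ U.erase c, u i
  have hs : 0 ≤ s := sum_nonneg fun i hi => (hu i hi).le
  refine ⟨Function.update u c (s + q), s + 2 * q, fun i hi => ?_, fun A hAU => ?_⟩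
  · rcases eq_or_ne i c with rfl | hic
    · rw [Function.update_self]
      positivity
    · rw [Function.update_of_ne hic]
      exact hu i (mem_erase.2 ⟨hic, hi⟩)
  by_cases hcA : c ∈ A
  · rw [sum_update_of_mem hcA, sdiff_singleton_eq_erase, hcK A hAU hcA]
    constructor <;> intro <;> linarith
  · have hAc : A ⊆ U.erase c := subset_erase.2 ⟨hAU, hcA⟩
    rw [sum_update_of_notMem hcA]
    refine iff_of_true (hK hAc hc) ?_
    linarith [sum_le_sum_of_subset_of_nonneg hAc fun i hi _ => (hu i hi).le]

theorem IsComplexOn.isThresholdOn (hK : IsComplexOn U K) (hw : IsKSubmodularOn U K w t) :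
    IsThresholdOn U K := by
  induction U using Finset.strongInduction generalizing K w t with
  | H U ih =>
    by_cases hU : U ∈ K
    · exact isThresholdOn_of_mem hK.isLowerSet hU
    by_cases hco : ∃ c ∈ U, U.erase c ∈ K
    · obtain ⟨c, hc, hcK⟩ := hco
      obtain ⟨G, hGU, hG⟩ := hK.exists_link hc
      exact .of_link hK.isLowerSet hcK hG
        (ih G (hGU.trans_ssubset (erase_ssubset hc)) hG (hw.link hGU))
    · push Not at hco
      exact hw.isThresholdOn_of_forall_erase_notMem hK hU hco

end

theorem IsKSubmodular.isKSubmodularOn {n : ℕ} {K : Set (Finset (Fin n))} {x y : Fin n → ℝ}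
    (hK : IsComplex n K) (h : IsKSubmodular n K x y) :
    IsKSubmodularOn univ K (x + y) (∑ i, y i) := by
  have hsum : ∀ A : Finset (Fin n),
      ∑ i ∈ A, (x + y) i - ∑ i, y i = ∑ i ∈ A, x i - ∑ i ∈ Aᶜ, y i := fun A => by
    rw [← Finset.sum_add_sum_compl A y, Pi.add_def, sum_add_distrib]
    ring
  refine ⟨fun X c₁ c₂ h₁ h₂ hT => ?_, fun X c₁ c₂ _ _ hne hX h₁ h₂ => ?_,
    fun X c₁ c₂ _ hc₂ h₂ h₁ => ?_⟩
  · have hne : c₁ ≠ c₂ := by rintro rfl; rw [insert_idem] at hT; exact hT h₁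
    have hc₁ : c₁ ∉ X := fun h => hT (by rwa [insert_eq_of_mem (mem_insert_of_mem h)])
    have hc₂ : c₂ ∉ X := fun h => hT (by rwa [insert_eq_of_mem h])
    have := (h X c₁ c₂ hne hc₁ hc₂ (hK.2 _ _ (subset_insert c₁ X) h₁) hT).1 h₁ h₂
    have hxT : ∑ i ∈ insert c₁ (insert c₂ X), x i = ∑ i ∈ X, x i + x c₁ + x c₂ := by
      rw [sum_insert (by simp [hne, hc₁]), sum_insert hc₂]
      ring
    linarith [hsum (insert c₁ (insert c₂ X))]
  · have hc₁ : c₁ ∉ X := fun h => h₁ (by rwa [insert_eq_of_mem h])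
    have hc₂ : c₂ ∉ X := fun h => h₂ (by rwa [insert_eq_of_mem h])
    have hT : insert c₁ (insert c₂ X) ∉ K :=
      fun h => h₁ (hK.2 _ _ (insert_subset_insert c₁ (subset_insert c₂ X)) h)
    have := (h X c₁ c₂ hne hc₁ hc₂ hX hT).2.1 h₁ h₂
    have hyT := Finset.sum_add_sum_compl (insert c₁ (insert c₂ X)) y
    rw [sum_insert (by simp [hne, hc₁]), sum_insert hc₂, ← Finset.sum_add_sum_compl X y] at hyT
    linarith [hsum X]
  · have hne : c₁ ≠ c₂ := by rintro rfl; exact h₁ h₂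
    have hc₁ : c₁ ∉ X :=
      fun h => h₁ (by rw [insert_eq_of_mem h]; exact hK.2 _ _ (subset_insert c₂ X) h₂)
    have hT : insert c₁ (insert c₂ X) ∉ K :=
      fun h => h₁ (hK.2 _ _ (insert_subset_insert c₁ (subset_insert c₂ X)) h)
    exact (h X c₁ c₂ hne hc₁ hc₂ (hK.2 _ _ (subset_insert c₂ X) h₂) hT).2.2 h₂ h₁

theorem threshold_of_KSubmodular_general (n : ℕ) (K : Set (Finset (Fin n)))
    (hK : IsComplex n K) (hghost : NoGhost n K)
    (x y : Fin n → ℝ) (hxy : IsKSubmodular n K x y) :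
    IsThreshold n K := by
  have hKU : IsComplexOn univ K :=
    ⟨hK.1, fun A _ => subset_univ A, fun _ _ hAB hB => hK.2 _ _ hAB hB, fun i _ => hghost i⟩
  obtain ⟨w, q, hw, hq⟩ := hKU.isThresholdOn (hxy.isKSubmodularOn hK)
  exact ⟨w, q, fun i => hw i (mem_univ i), fun A => hq A (subset_univ A)⟩

/-- If a proper simplicial complex `K` on `[n]` without ghost
vertices admits a K-submodular function, then `K` is a threshold complex. -/
theorem threshold_of_KSubmodular (n : ℕ) (K : Set (Finset (Fin n)))
    (hK : IsComplex n K) (hproper : K ≠ Set.univ) (hghost : NoGhost n K)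
    (x y : Fin n → ℝ) (hxy : IsKSubmodular n K x y) :
    IsThreshold n K :=
  threshold_of_KSubmodular_general n K hK hghost x y hxy
end

section
/- Let K be a proper simplicial complex on [n] without ghost vertices. Then K admits a K-submodular function if and only if there exist vectors x, y : [n] → ℝ with x(i) > 0 and y(i) > 0 for all i ∈ [n], such that x(S) > y(Sᶜ) for every S ⊆ [n] with S ∉ K, and x(T) < y(Tᶜ) for every T ∈ K. -/
open Finset

namespace KSubAux
variable {n : ℕ}

/-- Combined ridge hypothesis in terms of `z = x + y` and `q = y(U)`. -/
def Hyp (U : Finset (Fin n)) (K : Set (Finset (Fin n))) (z : Fin n → ℝ) (q : ℝ) : Prop :=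
  ∀ X1 : Finset (Fin n), ∀ c1 c2 : Fin n, c1 ∈ U → c2 ∈ U → c1 ≠ c2 → c1 ∉ X1 → c2 ∉ X1 →
    X1 ∈ K → insert c1 (insert c2 X1) ∉ K →
    ((insert c1 X1 ∈ K → insert c2 X1 ∈ K → q < ∑ i ∈ insert c1 (insert c2 X1), z i) ∧
     (insert c1 X1 ∉ K → insert c2 X1 ∉ K → ∑ i ∈ X1, z i < q) ∧
     (insert c2 X1 ∈ K → insert c1 X1 ∉ K → 0 < z c2))

lemma Vstar (U : Finset (Fin n)) (K : Set (Finset (Fin n))) (z : Fin n → ℝ) (q : ℝ)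
    (hdown : ∀ A B : Finset (Fin n), A ⊆ B → B ∈ K → A ∈ K)
    (hsub : ∀ A ∈ K, A ⊆ U) (H : Hyp U K z q) :
    ∀ k : ℕ, ∀ A : Finset (Fin n), ∀ c : Fin n,
      (U \ insert c A).card ≤ k → A ∈ K → c ∈ U → c ∉ A → insert c A ∉ K →
      U.erase c ∉ K → (∑ i ∈ A, z i < q ∨ 0 < z c) := by
  classical
  intro k
  induction k with
  | zero =>
    intro A c hcard hA hcU hcA hins herase
    exfalso
    have hempty : U \ insert c A = ∅ := card_eq_zero.mp (Nat.le_zero.mp hcard)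
    have hUsub : U ⊆ insert c A := by
      intro e he
      by_contra hne
      exact (notMem_empty e) (hempty ▸ mem_sdiff.mpr ⟨he, hne⟩)
    have : A = U.erase c := by
      apply Finset.Subset.antisymm
      · intro a ha
        exact mem_erase.mpr ⟨fun h => hcA (h ▸ ha), hsub A hA ha⟩
      · intro a ha
        rcases mem_erase.mp ha with ⟨hac, haU⟩
        rcases mem_insert.mp (hUsub haU) with h | h
        · exact absurd h hac
        · exact h
    exact herase (this ▸ hA)
  | succ k ih =>
    intro A c hcard hA hcU hcA hins herase
    by_cases hd : ∃ d ∈ U \ insert c A, insert d A ∉ K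
    · obtain ⟨d, hdmem, hdK⟩ := hd
      rcases mem_sdiff.mp hdmem with ⟨hdU, hdins⟩
      have hdc : d ≠ c := fun h => hdins (h ▸ mem_insert_self c A)
      have hdA : d ∉ A := fun h => hdins (mem_insert_of_mem h)
      have hF : insert c (insert d A) ∉ K := fun h =>
        hins (hdown _ _ (insert_subset_insert c (subset_insert d A)) h)
      exact Or.inl ((H A c d hcU hdU hdc.symm hcA hdA hA hF).2.1 hins hdK)
    · push_neg at hd
      rcases (U \ insert c A).eq_empty_or_nonempty with he | ⟨d, hdmem⟩
      · exfalso
        have hUsub : U ⊆ insert c A := by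
          intro e heU
          by_contra hne
          exact (notMem_empty e) (he ▸ mem_sdiff.mpr ⟨heU, hne⟩)
        have : A = U.erase c := by
          apply Finset.Subset.antisymm
          · intro a ha
            exact mem_erase.mpr ⟨fun h => hcA (h ▸ ha), hsub A hA ha⟩
          · intro a ha
            rcases mem_erase.mp ha with ⟨hac, haU⟩
            rcases mem_insert.mp (hUsub haU) with h | h
            · exact absurd h hac
            · exact h
        exact herase (this ▸ hA)
      · have hdK : insert d A ∈ K := hd d hdmem
        rcases mem_sdiff.mp hdmem with ⟨hdU, hdins⟩
        have hdc : d ≠ c := fun h => hdins (h ▸ mem_insert_self c A)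
        have hdA : d ∉ A := fun h => hdins (mem_insert_of_mem h)
        have hF : insert c (insert d A) ∉ K := fun h =>
          hins (hdown _ _ (insert_subset_insert c (subset_insert d A)) h)
        have hzd : 0 < z d := (H A c d hcU hdU hdc.symm hcA hdA hA hF).2.2 hdK hins
        have hcard' : (U \ insert c (insert d A)).card ≤ k := by
          have hss : U \ insert c (insert d A) ⊂ U \ insert c A := by
            rw [Finset.ssubset_iff_of_subset
              (sdiff_subset_sdiff (Finset.Subset.refl U)
                (insert_subset_insert c (subset_insert d A)))]
            exact ⟨d, hdmem, fun h => (mem_sdiff.mp h).2 (mem_insert_of_mem (mem_insert_self d A))⟩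
          have := card_lt_card hss
          omega
        have hcA' : c ∉ insert d A := by
          simp only [mem_insert]
          push_neg
          exact ⟨hdc.symm.symm ∘ Eq.symm ∘ Eq.symm ∘ id |>.mt |> fun _ => (fun h => hdc h.symm), hcA⟩
        rcases ih (insert d A) c hcard' hdK hcU (by
            simp only [mem_insert]; push_neg; exact ⟨fun h => hdc h.symm, hcA⟩) hF herase with h | h
        · left
          rw [sum_insert hdA] at h
          linarith
        · exact Or.inr h








lemma zpos (U : Finset (Fin n)) (K : Set (Finset (Fin n))) (z : Fin n → ℝ) (q : ℝ)
    (hdown : ∀ A B : Finset (Fin n), A ⊆ B → B ∈ K → A ∈ K)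
    (hsub : ∀ A ∈ K, A ⊆ U) (H : Hyp U K z q) (hU : U ∉ K) :
    ∀ c ∈ U, ({c} : Finset (Fin n)) ∈ K → U.erase c ∉ K → 0 < z c := by
  classical
  intro c hcU hcK herase
  set F : Finset (Finset (Fin n)) :=
    U.powerset.filter (fun A => c ∉ A ∧ insert c A ∈ K) with hF
  have hne : F.Nonempty := by
    refine ⟨∅, ?_⟩
    simp only [hF, mem_filter, mem_powerset]
    exact ⟨empty_subset U, notMem_empty c, by simpa using hcK⟩
  obtain ⟨A, hAF, hmax⟩ := F.exists_max_image card hne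
  simp only [hF, mem_filter, mem_powerset] at hAF
  obtain ⟨hAU, hcA, hcins⟩ := hAF
  have hinsU : insert c A ⊆ U := insert_subset hcU hAU
  have hinsne : insert c A ≠ U := fun h => hU (h ▸ hcins)
  have hbne : (U \ insert c A).Nonempty := by
    rw [sdiff_nonempty]
    exact fun h => hinsne (Finset.Subset.antisymm hinsU h)
  obtain ⟨b, hbmem⟩ := hbne
  rcases mem_sdiff.mp hbmem with ⟨hbU, hbins⟩
  have hbc : b ≠ c := fun h => hbins (h ▸ mem_insert_self c A)
  have hbA : b ∉ A := fun h => hbins (mem_insert_of_mem h)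
  -- maximality: insert c (insert b A) ∉ K
  have hFnot : insert c (insert b A) ∉ K := by
    intro h
    have hmem : insert b A ∈ F := by
      simp only [hF, mem_filter, mem_powerset]
      refine ⟨insert_subset hbU hAU, ?_, h⟩
      simp only [mem_insert]
      push_neg
      exact ⟨fun hcb => hbc hcb.symm, hcA⟩
    have := hmax _ hmem
    rw [card_insert_of_notMem hbA] at this
    omega
  have hFnot' : insert b (insert c A) ∉ K := by
    rwa [Finset.insert_comm]
  by_cases hb : insert b A ∈ K
  · -- Λ-configuration
    have hΛ := (H A b c hbU hcU hbc hbA hcA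
      (hdown A (insert b A) (subset_insert b A) hb) hFnot').1 hb hcins
    have hV := Vstar U K z q hdown hsub H (U \ insert c (insert b A)).card
      (insert b A) c le_rfl hb hcU
      (by simp only [mem_insert]; push_neg; exact ⟨fun h => hbc h.symm, hcA⟩)
      hFnot herase
    rcases hV with h | h
    · rw [sum_insert hbA] at h
      have hcbA : c ∉ insert b A := by
        simp only [mem_insert]; push_neg; exact ⟨fun h => hbc h.symm, hcA⟩
      rw [show insert b (insert c A) = insert c (insert b A) from Finset.insert_comm b c A,
        sum_insert hcbA, sum_insert hbA] at hΛ
      linarith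
    · exact h
  · -- X-configuration
    exact (H A b c hbU hcU hbc hbA hcA
      (hdown A (insert c A) (subset_insert c A) hcins) hFnot').2.2 hcins hb

lemma sum_ge_neg_abs (U A : Finset (Fin n)) (w : Fin n → ℝ) (hA : A ⊆ U) :
    -(∑ i ∈ U, |w i|) ≤ ∑ i ∈ A, w i := by
  have h1 : ∑ i ∈ A, |w i| ≤ ∑ i ∈ U, |w i| :=
    sum_le_sum_of_subset_of_nonneg hA (fun i _ _ => abs_nonneg _)
  have h2 : ∑ i ∈ A, -|w i| ≤ ∑ i ∈ A, w i := Finset.sum_le_sum (fun i _ => neg_abs_le _)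
  rw [Finset.sum_neg_distrib] at h2
  linarith

lemma sum_le_abs (U A : Finset (Fin n)) (w : Fin n → ℝ) (hA : A ⊆ U) :
    ∑ i ∈ A, w i ≤ ∑ i ∈ U, |w i| := by
  have h1 : ∑ i ∈ A, |w i| ≤ ∑ i ∈ U, |w i| :=
    sum_le_sum_of_subset_of_nonneg hA (fun i _ _ => abs_nonneg _)
  have h2 : ∑ i ∈ A, w i ≤ ∑ i ∈ A, |w i| := Finset.sum_le_sum (fun i _ => le_abs_self _)
  linarith
lemma sep : ∀ N : ℕ, ∀ U : Finset (Fin n), U.card ≤ N →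
    ∀ K : Set (Finset (Fin n)), ∀ z : Fin n → ℝ, ∀ q : ℝ,
    ∅ ∈ K → (∀ A B : Finset (Fin n), A ⊆ B → B ∈ K → A ∈ K) →
    (∀ A ∈ K, A ⊆ U) → U ∉ K → Hyp U K z q →
    ∃ w : Fin n → ℝ, ∃ r : ℝ,
      (∀ S ⊆ U, S ∉ K → r < ∑ i ∈ S, w i) ∧ (∀ T ∈ K, ∑ i ∈ T, w i < r) := by
  classical
  intro N
  induction N with
  | zero =>
    intro U hcard K z q hemp hdown hsub hU H
    exact absurd (card_eq_zero.mp (Nat.le_zero.mp hcard) ▸ hemp) hU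
  | succ N ih =>
    intro U hcard K z q hemp hdown hsub hU H
    by_cases hg : ∃ g ∈ U, ({g} : Finset (Fin n)) ∉ K
    · -- ghost vertex
      obtain ⟨g, hgU, hgK⟩ := hg
      have hgnotin : ∀ T ∈ K, g ∉ T := fun T hT hgT =>
        hgK (hdown {g} T (singleton_subset_iff.mpr hgT) hT)
      by_cases hUg : U.erase g ∈ K
      · -- K = all subsets of U.erase g
        refine ⟨fun i => if i = g then 1 else 0, 1/2, ?_, ?_⟩
        · intro S hSU hSK
          have hgS : g ∈ S := by
            by_contra hgS
            exact hSK (hdown S (U.erase g)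
              (fun a ha => mem_erase.mpr ⟨fun h => hgS (h ▸ ha), hSU ha⟩) hUg)
          have : (1:ℝ) ≤ ∑ i ∈ S, (if i = g then (1:ℝ) else 0) := by
            have := Finset.add_sum_erase S (fun i => if i = g then (1:ℝ) else 0) hgS
            have hnn : (0:ℝ) ≤ ∑ i ∈ S.erase g, (if i = g then (1:ℝ) else 0) :=
              Finset.sum_nonneg (fun i _ => by positivity)
            simp only [if_true] at this
            linarith [this.symm.le, le_of_eq this]
          linarith
        · intro T hT
          have : ∑ i ∈ T, (if i = g then (1:ℝ) else 0) = 0 :=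
            Finset.sum_eq_zero (fun i hi => if_neg (fun h : i = g => hgnotin T hT (h ▸ hi)))
          rw [this]; norm_num
      · -- recurse on U.erase g
        have hsub' : ∀ A ∈ K, A ⊆ U.erase g := fun A hA a ha =>
          mem_erase.mpr ⟨fun h => hgnotin A hA (h ▸ ha), hsub A hA ha⟩
        have H' : Hyp (U.erase g) K z q := fun X1 c1 c2 h1 h2 =>
          H X1 c1 c2 (mem_of_mem_erase h1) (mem_of_mem_erase h2)
        have hcard' : (U.erase g).card ≤ N := by
          rw [card_erase_of_mem hgU]; omega
        obtain ⟨w, r, hw1, hw2⟩ := ih (U.erase g) hcard' K z q hemp hdown hsub' hUg H'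
        set M := 1 + |r| + ∑ i ∈ U, |w i| with hM
        refine ⟨fun i => if i = g then M else w i, r, ?_, ?_⟩
        · intro S hSU hSK
          by_cases hgS : g ∈ S
          · have hsum : ∑ i ∈ S, (if i = g then M else w i) = M + ∑ i ∈ S.erase g, w i := by
              rw [← Finset.add_sum_erase S _ hgS, if_pos rfl]
              congr 1
              exact sum_congr rfl (fun i hi => if_neg (ne_of_mem_erase hi))
            rw [hsum]
            have h1 : -(∑ i ∈ U, |w i|) ≤ ∑ i ∈ S.erase g, w i :=
              sum_ge_neg_abs U _ w ((erase_subset g S).trans hSU)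
            have h2 : r ≤ |r| := le_abs_self r
            linarith
          · have hsum : ∑ i ∈ S, (if i = g then M else w i) = ∑ i ∈ S, w i :=
              sum_congr rfl (fun i hi => if_neg (fun h : i = g => hgS (h ▸ hi)))
            rw [hsum]
            exact hw1 S (fun a ha => mem_erase.mpr ⟨fun h => hgS (h ▸ ha), hSU ha⟩) hSK
        · intro T hT
          have hsum : ∑ i ∈ T, (if i = g then M else w i) = ∑ i ∈ T, w i :=
            sum_congr rfl (fun i hi => if_neg (fun h : i = g => hgnotin T hT (h ▸ hi)))
          rw [hsum]
          exact hw2 T hT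
    · -- no ghost vertices
      push_neg at hg
      by_cases hD : ∃ c ∈ U, U.erase c ∈ K
      · -- D nonempty
        set D := U.filter (fun c => U.erase c ∈ K) with hDdef
        have hDne : D.Nonempty := by
          obtain ⟨c, hcU, hcK⟩ := hD
          exact ⟨c, mem_filter.mpr ⟨hcU, hcK⟩⟩
        have hDU : D ⊆ U := filter_subset _ _
        have hkey : ∀ S ⊆ U, S ∉ K → D ⊆ S := by
          intro S hSU hSK c hcD
          by_contra hcS
          rcases mem_filter.mp hcD with ⟨hcU, hcK⟩
          exact hSK (hdown S (U.erase c)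
            (fun a ha => mem_erase.mpr ⟨fun h => hcS (h ▸ ha), hSU ha⟩) hcK)
        by_cases hDK : D ∈ K
        · -- recurse on the link complex L
          set V := U \ D with hVdef
          have hVU : V ⊆ U := sdiff_subset
          have hVcard : V.card ≤ N := by
            rw [hVdef, card_sdiff_of_subset hDU]
            have := card_pos.mpr hDne
            omega
          set L : Set (Finset (Fin n)) := {B | B ⊆ V ∧ B ∪ D ∈ K} with hLdef
          have hLemp : ∅ ∈ L := ⟨empty_subset V, by rwa [empty_union]⟩
          have hLdown : ∀ A B : Finset (Fin n), A ⊆ B → B ∈ L → A ∈ L := by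
            intro A B hAB hB
            exact ⟨hAB.trans hB.1, hdown _ _ (union_subset_union_left hAB) hB.2⟩
          have hLsub : ∀ A ∈ L, A ⊆ V := fun A hA => hA.1
          have hLU : V ∉ L := by
            intro h
            have h2 := h.2
            rw [sdiff_union_of_subset hDU] at h2
            exact hU h2
          have hdisjD : ∀ B : Finset (Fin n), B ⊆ V → Disjoint B D := fun B hB =>
            Finset.disjoint_of_subset_left hB sdiff_disjoint
          have HL : Hyp V L z (q - ∑ i ∈ D, z i) := by
            intro B1 c1 c2 hc1 hc2 hne h1 h2 hB1 hFL
            rcases mem_sdiff.mp hc1 with ⟨hc1U, hc1D⟩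
            rcases mem_sdiff.mp hc2 with ⟨hc2U, hc2D⟩
            have hc1B : c1 ∉ B1 ∪ D := fun h => (mem_union.mp h).elim h1 hc1D
            have hc2B : c2 ∉ B1 ∪ D := fun h => (mem_union.mp h).elim h2 hc2D
            have e1 : insert c1 (insert c2 (B1 ∪ D)) = (insert c1 (insert c2 B1)) ∪ D := by
              rw [insert_union, insert_union]
            have e2 : insert c1 (B1 ∪ D) = insert c1 B1 ∪ D := (insert_union c1 B1 D).symm
            have e3 : insert c2 (B1 ∪ D) = insert c2 B1 ∪ D := (insert_union c2 B1 D).symm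
            have hFsub : insert c1 (insert c2 B1) ⊆ V :=
              insert_subset hc1 (insert_subset hc2 hB1.1)
            have hFK : insert c1 (insert c2 (B1 ∪ D)) ∉ K := by
              rw [e1]; exact fun h => hFL ⟨hFsub, h⟩
            have hHH := H (B1 ∪ D) c1 c2 hc1U hc2U hne hc1B hc2B hB1.2 hFK
            have m1 : insert c1 (B1 ∪ D) ∈ K ↔ insert c1 B1 ∈ L := by
              rw [e2]
              exact ⟨fun h => ⟨insert_subset hc1 hB1.1, h⟩, fun h => h.2⟩
            have m2 : insert c2 (B1 ∪ D) ∈ K ↔ insert c2 B1 ∈ L := by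
              rw [e3]
              exact ⟨fun h => ⟨insert_subset hc2 hB1.1, h⟩, fun h => h.2⟩
            have s0 : ∑ i ∈ B1 ∪ D, z i = ∑ i ∈ B1, z i + ∑ i ∈ D, z i :=
              sum_union (hdisjD B1 hB1.1)
            have sF : ∑ i ∈ insert c1 (insert c2 (B1 ∪ D)), z i
                = ∑ i ∈ insert c1 (insert c2 B1), z i + ∑ i ∈ D, z i := by
              rw [e1]; exact sum_union (hdisjD _ hFsub)
            refine ⟨?_, ?_, ?_⟩
            · intro k1 k2
              have hc := hHH.1 (m1.mpr k1) (m2.mpr k2)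
              rw [sF] at hc
              linarith
            · intro k1 k2
              have hc := hHH.2.1 (fun h => k1 (m1.mp h)) (fun h => k2 (m2.mp h))
              rw [s0] at hc
              linarith
            · intro k1 k2
              exact hHH.2.2 (m2.mpr k1) (fun h => k2 (m1.mp h))
          obtain ⟨w, r, hw1, hw2⟩ := ih V hVcard L z _ hLemp hLdown hLsub hLU HL
          set M := 1 + |r| + ∑ i ∈ U, |w i| with hMdef
          have habs : 0 ≤ ∑ i ∈ U, |w i| := Finset.sum_nonneg (fun i _ => abs_nonneg _)
          have hM0 : (0:ℝ) ≤ M := by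
            have := abs_nonneg r
            rw [hMdef]; linarith
          have hsplit : ∀ A : Finset (Fin n), ∑ i ∈ A, (if i ∈ D then M else w i)
              = ((A.filter (· ∈ D)).card : ℝ) * M + ∑ i ∈ A \ D, w i := by
            intro A
            rw [← sum_filter_add_sum_filter_not A (· ∈ D)]
            congr 1
            · rw [sum_congr rfl (fun i hi => if_pos ((mem_filter.mp hi).2)),
                sum_const, nsmul_eq_mul]
            · have hfe : A.filter (fun i => ¬ i ∈ D) = A \ D := by
                ext a
                simp [mem_filter, mem_sdiff]
              rw [hfe]
              exact sum_congr rfl (fun i hi => if_neg ((mem_sdiff.mp hi).2))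
          refine ⟨fun i => if i ∈ D then M else w i, (D.card : ℝ) * M + r, ?_, ?_⟩
          · intro S hSU hSK
            have hDS := hkey S hSU hSK
            have hfD : S.filter (· ∈ D) = D :=
              Finset.Subset.antisymm (fun a ha => (mem_filter.mp ha).2)
                (fun a ha => mem_filter.mpr ⟨hDS ha, ha⟩)
            have hSD : S \ D ∉ L := by
              intro hh
              have h2 := hh.2
              rw [sdiff_union_of_subset hDS] at h2
              exact hSK h2
            have hlow := hw1 (S \ D) (sdiff_subset_sdiff hSU (Finset.Subset.refl D)) hSD
            rw [hsplit S, hfD]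
            linarith
          · intro T hT
            have hTU := hsub T hT
            rw [hsplit T]
            by_cases hDT : D ⊆ T
            · have hfD : T.filter (· ∈ D) = D :=
                Finset.Subset.antisymm (fun a ha => (mem_filter.mp ha).2)
                  (fun a ha => mem_filter.mpr ⟨hDT ha, ha⟩)
              have hTD : T \ D ∈ L :=
                ⟨sdiff_subset_sdiff hTU (Finset.Subset.refl D),
                 by rwa [sdiff_union_of_subset hDT]⟩
              have hup := hw2 (T \ D) hTD
              rw [hfD]
              linarith
            · have ha : (T.filter (· ∈ D)).card + 1 ≤ D.card := by
                have hss : T.filter (· ∈ D) ⊂ D := by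
                  refine (Finset.ssubset_iff_of_subset
                    (fun a ha => (mem_filter.mp ha).2)).mpr ?_
                  obtain ⟨c, hcD, hcT⟩ := Finset.not_subset.mp hDT
                  exact ⟨c, hcD, fun h => hcT (mem_filter.mp h).1⟩
                have := card_lt_card hss
                omega
              have haR : ((T.filter (· ∈ D)).card : ℝ) ≤ (D.card : ℝ) - 1 := by
                have : ((T.filter (· ∈ D)).card : ℝ) + 1 ≤ (D.card : ℝ) := by
                  exact_mod_cast ha
                linarith
              have hb : ∑ i ∈ T \ D, w i ≤ ∑ i ∈ U, |w i| :=
                sum_le_abs U _ w (Finset.sdiff_subset.trans hTU)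
              have hmul : ((T.filter (· ∈ D)).card : ℝ) * M ≤ ((D.card : ℝ) - 1) * M :=
                mul_le_mul_of_nonneg_right haR hM0
              have hrr : -|r| ≤ r := neg_abs_le r
              linarith
        · -- D not a face : K = {T : ¬ D ⊆ T}
          refine ⟨fun c => if c ∈ D then ((n:ℝ)+1) else 1,
            ((n:ℝ)+1) * (D.card : ℝ) - 1/2, ?_, ?_⟩
          all_goals
            have hsplit : ∀ A : Finset (Fin n), ∑ i ∈ A, (if i ∈ D then ((n:ℝ)+1) else 1)
                = ((A.filter (· ∈ D)).card : ℝ) * ((n:ℝ)+1) + ((A \ D).card : ℝ) := by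
              intro A
              rw [← sum_filter_add_sum_filter_not A (· ∈ D)]
              congr 1
              · rw [sum_congr rfl (fun i hi => if_pos ((mem_filter.mp hi).2)),
                  sum_const, nsmul_eq_mul]
              · have hfe : A.filter (fun i => ¬ i ∈ D) = A \ D := by
                  ext a
                  simp [mem_filter, mem_sdiff]
                rw [hfe, sum_congr rfl (fun i hi => if_neg ((mem_sdiff.mp hi).2)),
                  sum_const, nsmul_eq_mul, mul_one]
          · intro S hSU hSK
            have hDS := hkey S hSU hSK
            have hfD : S.filter (· ∈ D) = D :=
              Finset.Subset.antisymm (fun a ha => (mem_filter.mp ha).2)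
                (fun a ha => mem_filter.mpr ⟨hDS ha, ha⟩)
            rw [hsplit S, hfD]
            have : (0:ℝ) ≤ ((S \ D).card : ℝ) := Nat.cast_nonneg _
            linarith
          · intro T hT
            have hTU := hsub T hT
            have hDT : ¬ D ⊆ T := fun h => hDK (hdown D T h hT)
            have ha : (T.filter (· ∈ D)).card + 1 ≤ D.card := by
              have hss : T.filter (· ∈ D) ⊂ D := by
                refine (Finset.ssubset_iff_of_subset
                  (fun a ha => (mem_filter.mp ha).2)).mpr ?_
                obtain ⟨c, hcD, hcT⟩ := Finset.not_subset.mp hDT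
                exact ⟨c, hcD, fun h => hcT (mem_filter.mp h).1⟩
              have := card_lt_card hss
              omega
            have haR : ((T.filter (· ∈ D)).card : ℝ) ≤ (D.card : ℝ) - 1 := by
              have : ((T.filter (· ∈ D)).card : ℝ) + 1 ≤ (D.card : ℝ) := by
                exact_mod_cast ha
              linarith
            have hbN : (T \ D).card ≤ n := by
              have h1 : (T \ D).card ≤ T.card := card_le_card Finset.sdiff_subset
              have h2 : T.card ≤ (Finset.univ : Finset (Fin n)).card := card_le_univ T
              simpa using h1.trans h2
            have hbR : ((T \ D).card : ℝ) ≤ (n : ℝ) := by exact_mod_cast hbN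
            have hmul : ((T.filter (· ∈ D)).card : ℝ) * ((n:ℝ)+1)
                ≤ ((D.card : ℝ) - 1) * ((n:ℝ)+1) :=
              mul_le_mul_of_nonneg_right haR (by positivity)
            rw [hsplit T]
            linarith
      · -- D empty : use z, q directly
        push_neg at hD
        have hz : ∀ c ∈ U, 0 < z c := fun c hc =>
          zpos U K z q hdown hsub H hU c hc (hg c hc) (hD c hc)
        refine ⟨z, q, ?_, ?_⟩
        · intro S hSU hSK
          obtain ⟨S0, hS0mem, hS0min⟩ :=
            (S.powerset.filter (fun A => A ∉ K)).exists_min_image card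
              ⟨S, mem_filter.mpr ⟨mem_powerset.mpr (Finset.Subset.refl S), hSK⟩⟩
          rw [mem_filter, mem_powerset] at hS0mem
          obtain ⟨hS0S, hS0K⟩ := hS0mem
          have hproper : ∀ A, A ⊂ S0 → A ∈ K := by
            intro A hA
            by_contra hAK
            have := hS0min A (mem_filter.mpr
              ⟨mem_powerset.mpr (hA.subset.trans hS0S), hAK⟩)
            exact absurd (card_lt_card hA) (not_lt.mpr this)
          have hS0card : 2 ≤ S0.card := by
            by_contra hlt
            push_neg at hlt
            interval_cases h : S0.card
            · exact hS0K (card_eq_zero.mp h ▸ hemp)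
            · obtain ⟨c, hc⟩ := card_eq_one.mp h
              exact hS0K (hc ▸ hg c (hSU (hS0S (hc ▸ mem_singleton_self c))))
          obtain ⟨c1, hc1, c2, hc2, hc12⟩ := one_lt_card.mp hS0card
          set X1 := (S0.erase c1).erase c2 with hX1def
          have hc2e : c2 ∈ S0.erase c1 := mem_erase.mpr ⟨fun h => hc12 h.symm, hc2⟩
          have hins2 : insert c2 X1 = S0.erase c1 := insert_erase hc2e
          have hins12 : insert c1 (insert c2 X1) = S0 := by
            rw [hins2, insert_erase hc1]
          have hX1c1 : c1 ∉ X1 := fun h =>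
            notMem_erase c1 S0 (Finset.erase_subset c2 (S0.erase c1) h)
          have hX1c2 : c2 ∉ X1 := notMem_erase c2 _
          have hX1K : X1 ∈ K := by
            apply hproper
            refine Finset.ssubset_iff_of_subset
              (((Finset.erase_subset _ _).trans (Finset.erase_subset _ _))) |>.mpr ?_
            exact ⟨c1, hc1, hX1c1⟩
          have h2K : insert c2 X1 ∈ K := by
            rw [hins2]; exact hproper _ (erase_ssubset hc1)
          have h1K : insert c1 X1 ∈ K := by
            have he : insert c1 X1 = S0.erase c2 := by
              rw [hX1def, Finset.erase_right_comm,
                insert_erase (mem_erase.mpr ⟨hc12, hc1⟩)]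
            rw [he]; exact hproper _ (erase_ssubset hc2)
          have hΛ := (H X1 c1 c2 (hSU (hS0S hc1)) (hSU (hS0S hc2)) hc12 hX1c1 hX1c2
            hX1K (hins12 ▸ hS0K)).1 h1K h2K
          rw [hins12] at hΛ
          have hle : ∑ i ∈ S0, z i ≤ ∑ i ∈ S, z i :=
            sum_le_sum_of_subset_of_nonneg hS0S
              (fun i hi _ => le_of_lt (hz i (hSU hi)))
          linarith
        · intro T hT
          have hTU := hsub T hT
          obtain ⟨M, hMmem, hMmax⟩ :=
            (U.powerset.filter (fun A => T ⊆ A ∧ A ∈ K)).exists_max_image card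
              ⟨T, mem_filter.mpr ⟨mem_powerset.mpr hTU, Finset.Subset.refl T, hT⟩⟩
          rw [mem_filter, mem_powerset] at hMmem
          obtain ⟨hMU, hTM, hMK⟩ := hMmem
          have hmaxx : ∀ e ∈ U, e ∉ M → insert e M ∉ K := by
            intro e heU heM hins
            have := hMmax (insert e M) (mem_filter.mpr
              ⟨mem_powerset.mpr (insert_subset heU hMU),
               hTM.trans (subset_insert e M), hins⟩)
            rw [card_insert_of_notMem heM] at this
            omega
          have hUM2 : 1 < (U \ M).card := by
            by_contra hle2
            push_neg at hle2
            have h0 : (U \ M).card ≠ 0 := by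
              intro h0
              have hUMs : U ⊆ M := by
                intro a ha
                by_contra ham
                exact (notMem_empty a) (card_eq_zero.mp h0 ▸ mem_sdiff.mpr ⟨ha, ham⟩)
              exact hU (hdown U M hUMs hMK)
            have h1 : (U \ M).card = 1 := by omega
            obtain ⟨e, he⟩ := card_eq_one.mp h1
            have heU : e ∈ U := (mem_sdiff.mp (he ▸ mem_singleton_self e)).1
            have hMe : M = U.erase e := by
              apply Finset.Subset.antisymm
              · intro a ha
                refine mem_erase.mpr ⟨fun hae => ?_, hMU ha⟩
                exact (mem_sdiff.mp (he ▸ mem_singleton_self e)).2 (hae ▸ ha)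
              · intro a ha
                rcases mem_erase.mp ha with ⟨hae, haU⟩
                by_contra ham
                have hmem : a ∈ U \ M := mem_sdiff.mpr ⟨haU, ham⟩
                rw [he, mem_singleton] at hmem
                exact hae hmem
            exact hD e heU (hMe ▸ hMK)
          obtain ⟨c1, hc1, c2, hc2, hc12⟩ := one_lt_card.mp hUM2
          rcases mem_sdiff.mp hc1 with ⟨hc1U, hc1M⟩
          rcases mem_sdiff.mp hc2 with ⟨hc2U, hc2M⟩
          have h1n : insert c1 M ∉ K := hmaxx c1 hc1U hc1M
          have h2n : insert c2 M ∉ K := hmaxx c2 hc2U hc2M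
          have hFn : insert c1 (insert c2 M) ∉ K := fun h =>
            h2n (hdown _ _ (subset_insert c1 _) h)
          have hV := (H M c1 c2 hc1U hc2U hc12 hc1M hc2M hMK hFn).2.1 h1n h2n
          have hle : ∑ i ∈ T, z i ≤ ∑ i ∈ M, z i :=
            sum_le_sum_of_subset_of_nonneg hTM
              (fun i hi _ => le_of_lt (hz i (hMU hi)))
          linarith
lemma posify (K : Set (Finset (Fin n)))
    (hdown : ∀ A B : Finset (Fin n), A ⊆ B → B ∈ K → A ∈ K)
    (hU : (univ : Finset (Fin n)) ∉ K)
    (w : Fin n → ℝ) (r : ℝ)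
    (hw1 : ∀ S : Finset (Fin n), S ∉ K → r < ∑ i ∈ S, w i)
    (hw2 : ∀ T ∈ K, ∑ i ∈ T, w i < r) :
    ∃ w' : Fin n → ℝ, ∃ r' : ℝ, (∀ i, 0 < w' i) ∧
      (∀ S : Finset (Fin n), S ∉ K → r' < ∑ i ∈ S, w' i) ∧
      (∀ T ∈ K, ∑ i ∈ T, w' i < r') := by
  classical
  set NF : Finset (Finset (Fin n)) := Finset.univ.filter (fun S => S ∉ K) with hNF
  have hNne : NF.Nonempty := ⟨univ, mem_filter.mpr ⟨mem_univ _, hU⟩⟩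
  obtain ⟨S₀, hS₀, hmin⟩ := NF.exists_min_image (fun S => ∑ i ∈ S, w i) hNne
  set γ := ∑ i ∈ S₀, w i - r with hγ
  have hγpos : 0 < γ := by
    have := hw1 S₀ (mem_filter.mp hS₀).2
    rw [hγ]; linarith
  set ε := γ / (n + 1) with hε
  have hεpos : 0 < ε := by
    rw [hε]; positivity
  have hγε : γ = ((n:ℝ) + 1) * ε := by
    rw [hε]; field_simp
  refine ⟨fun i => max (w i) ε, r + n * ε,
    fun i => lt_of_lt_of_le hεpos (le_max_right _ _), ?_, ?_⟩
  · intro S hSK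
    have h1 : ∑ i ∈ S, w i ≤ ∑ i ∈ S, max (w i) ε :=
      Finset.sum_le_sum (fun i _ => le_max_left _ _)
    have h2 : r + γ ≤ ∑ i ∈ S, w i := by
      have := hmin S (mem_filter.mpr ⟨mem_univ _, hSK⟩)
      rw [hγ] at *
      linarith
    have h3 : (n:ℝ) * ε < γ := by
      rw [hγε]; nlinarith
    linarith
  · intro T hT
    set Tp := T.filter (fun i => ε ≤ w i) with hTp
    have hTpT : Tp ⊆ T := filter_subset _ _
    have hTpK : Tp ∈ K := hdown _ T hTpT hT
    have hsum : ∑ i ∈ T, max (w i) ε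
        = ∑ i ∈ Tp, w i + ((T.filter (fun i => ¬ ε ≤ w i)).card : ℝ) * ε := by
      rw [← sum_filter_add_sum_filter_not T (fun i => ε ≤ w i)]
      congr 1
      · exact sum_congr rfl (fun i hi => max_eq_left (mem_filter.mp hi).2)
      · rw [sum_congr rfl (fun i hi =>
          max_eq_right (le_of_lt (lt_of_not_ge (mem_filter.mp hi).2))),
          sum_const, nsmul_eq_mul]
    have hcard : ((T.filter (fun i => ¬ ε ≤ w i)).card : ℝ) ≤ (n : ℝ) := by
      have h1 : (T.filter (fun i => ¬ ε ≤ w i)).card ≤ (univ : Finset (Fin n)).card :=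
        card_le_univ _
      have h2 : (univ : Finset (Fin n)).card = n := by simp
      exact_mod_cast h2 ▸ h1
    have hTpr := hw2 Tp hTpK
    rw [hsum]
    nlinarith

lemma hyp_of_ksub (K : Set (Finset (Fin n))) (x y : Fin n → ℝ)
    (hxy : ∀ (X1 : Finset (Fin n)) (c1 c2 : Fin n),
      c1 ≠ c2 → c1 ∉ X1 → c2 ∉ X1 → X1 ∈ K → insert c1 (insert c2 X1) ∉ K →
      ((insert c1 X1 ∈ K → insert c2 X1 ∈ K →
          ∑ i ∈ X1, x i + x c1 + x c2 > ∑ j ∈ (insert c1 (insert c2 X1))ᶜ, y j) ∧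
       (insert c1 X1 ∉ K → insert c2 X1 ∉ K →
          ∑ j ∈ (insert c1 (insert c2 X1))ᶜ, y j + y c1 + y c2 > ∑ i ∈ X1, x i) ∧
       (insert c2 X1 ∈ K → insert c1 X1 ∉ K → x c2 + y c2 > 0))) :
    Hyp (univ : Finset (Fin n)) K (fun i => x i + y i)
      (∑ i ∈ (univ : Finset (Fin n)), y i) := by
  intro X1 c1 c2 _ _ hne h1 h2 hX1 hF
  obtain ⟨hΛ, hV, hX⟩ := hxy X1 c1 c2 hne h1 h2 hX1 hF
  have hc1F : c1 ∉ insert c2 X1 := by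
    simp only [mem_insert]
    push_neg
    exact ⟨hne, h1⟩
  have hxF : ∑ i ∈ insert c1 (insert c2 X1), x i = ∑ i ∈ X1, x i + x c1 + x c2 := by
    rw [sum_insert hc1F, sum_insert h2]; ring
  have hyF : ∑ i ∈ insert c1 (insert c2 X1), y i = ∑ i ∈ X1, y i + y c1 + y c2 := by
    rw [sum_insert hc1F, sum_insert h2]; ring
  have hcompl : ∑ i ∈ insert c1 (insert c2 X1), y i
      + ∑ j ∈ (insert c1 (insert c2 X1))ᶜ, y j = ∑ i ∈ (univ : Finset (Fin n)), y i :=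
    Finset.sum_add_sum_compl _ y
  have hzF : ∑ i ∈ insert c1 (insert c2 X1), (fun i => x i + y i) i
      = ∑ i ∈ insert c1 (insert c2 X1), x i + ∑ i ∈ insert c1 (insert c2 X1), y i := by
    simp [Finset.sum_add_distrib]
  have hzX : ∑ i ∈ X1, (fun i => x i + y i) i = ∑ i ∈ X1, x i + ∑ i ∈ X1, y i := by
    simp [Finset.sum_add_distrib]
  refine ⟨?_, ?_, ?_⟩
  · intro k1 k2
    have hc := hΛ k1 k2
    rw [hzF]
    linarith
  · intro k1 k2
    have hc := hV k1 k2
    rw [hzX]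
    linarith
  · intro k1 k2
    exact hX k1 k2

end KSubAux

open KSubAux

/-- A proper simplicial complex `K` on `[n]` without ghost
vertices admits a K-submodular function iff there are strictly positive vectors
`x, y` with `x(S) > y(Sᶜ)` for every non-face `S` and `x(T) < y(Tᶜ)` for every
face `T`. -/
theorem exists_KSubmodular_iff_system (n : ℕ) (K : Set (Finset (Fin n)))
    (hK : IsComplex n K) (hproper : K ≠ Set.univ) (hghost : NoGhost n K) :
    (∃ x y : Fin n → ℝ, IsKSubmodular n K x y) ↔
      ∃ x y : Fin n → ℝ, (∀ i, 0 < x i) ∧ (∀ i, 0 < y i) ∧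
        (∀ S : Finset (Fin n), S ∉ K → ∑ i ∈ S, x i > ∑ j ∈ Sᶜ, y j) ∧
        (∀ T : Finset (Fin n), T ∈ K → ∑ i ∈ T, x i < ∑ j ∈ Tᶜ, y j) := by
  obtain ⟨hemp, hdown⟩ := hK
  have hUniv : (univ : Finset (Fin n)) ∉ K := by
    intro h
    apply hproper
    ext A
    simp only [Set.mem_univ, iff_true]
    exact hdown A univ (subset_univ A) h
  constructor
  · rintro ⟨x, y, hxy⟩
    have H := hyp_of_ksub K x y hxy
    obtain ⟨w, r, hw1, hw2⟩ := sep n (univ : Finset (Fin n))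
      (by simp) K (fun i => x i + y i) (∑ i ∈ (univ : Finset (Fin n)), y i)
      hemp hdown (fun A _ => subset_univ A) hUniv H
    obtain ⟨w', r', hpos, hw1', hw2'⟩ := posify K hdown hUniv w r
      (fun S hS => hw1 S (subset_univ S) hS) hw2
    set Z := ∑ i ∈ (univ : Finset (Fin n)), w' i with hZ
    have hZr : r' < Z := hw1' univ hUniv
    have hr0 : 0 < r' := by
      have := hw2' ∅ hemp
      simpa using this
    have hZ0 : 0 < Z := lt_trans hr0 hZr
    have haZ : (r' / Z) * Z = r' := div_mul_cancel₀ r' (ne_of_gt hZ0)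
    have ha1 : r' / Z < 1 := (div_lt_one hZ0).mpr hZr
    have ha0 : 0 < r' / Z := div_pos hr0 hZ0
    refine ⟨fun i => (1 - r' / Z) * w' i, fun i => (r' / Z) * w' i, ?_, ?_, ?_, ?_⟩
    · intro i
      exact mul_pos (by linarith) (hpos i)
    · intro i
      exact mul_pos ha0 (hpos i)
    · intro S hS
      have hsx : ∑ i ∈ S, (1 - r' / Z) * w' i = (1 - r' / Z) * ∑ i ∈ S, w' i :=
        (Finset.mul_sum _ _ _).symm
      have hsy : ∑ j ∈ Sᶜ, (r' / Z) * w' j = (r' / Z) * (Z - ∑ i ∈ S, w' i) := by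
        rw [← Finset.mul_sum]
        congr 1
        have := Finset.sum_add_sum_compl S w'
        linarith
      have hgt := hw1' S hS
      rw [hsx, hsy]
      nlinarith [hgt, haZ]
    · intro T hT
      have hsx : ∑ i ∈ T, (1 - r' / Z) * w' i = (1 - r' / Z) * ∑ i ∈ T, w' i :=
        (Finset.mul_sum _ _ _).symm
      have hsy : ∑ j ∈ Tᶜ, (r' / Z) * w' j = (r' / Z) * (Z - ∑ i ∈ T, w' i) := by
        rw [← Finset.mul_sum]
        congr 1
        have := Finset.sum_add_sum_compl T w'
        linarith
      have hlt := hw2' T hT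
      rw [hsx, hsy]
      nlinarith [hlt, haZ]
  · rintro ⟨x, y, hx, hy, hnf, hf⟩
    refine ⟨x, y, ?_⟩
    intro X1 c1 c2 hne h1 h2 hX1 hF
    have hc1F : c1 ∉ insert c2 X1 := by
      simp only [mem_insert]
      push_neg
      exact ⟨hne, h1⟩
    refine ⟨?_, ?_, ?_⟩
    · intro _ _
      have := hnf (insert c1 (insert c2 X1)) hF
      rw [sum_insert hc1F, sum_insert h2] at this
      linarith
    · intro _ _
      have hXf := hf X1 hX1
      have e1 := Finset.sum_add_sum_compl (insert c1 (insert c2 X1)) y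
      have e2 := Finset.sum_add_sum_compl X1 y
      have e3 : ∑ i ∈ insert c1 (insert c2 X1), y i = ∑ i ∈ X1, y i + y c1 + y c2 := by
        rw [sum_insert hc1F, sum_insert h2]; ring
      linarith
    · intro _ _
      have := add_pos (hx c2) (hy c2)
      linarith
end

section
/- Let K be a simplicial complex on [n] and suppose x, y : [n] → ℝ have all values strictly positive and satisfy: x(S) > y(Sᶜ) for every S ⊆ [n] with S ∉ K, and x(T) < y(Tᶜ) for every T ∈ K. Then, setting z = x + y, for every A ⊆ [n] one has A ∈ K if and only if z(A) < y([n]); in particular K is the threshold complex with strictly positive weights z and quota y([n]). -/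
open Finset

theorem sum_add_lt_sum_iff_lt_sum_compl {α M : Type*} [Fintype α] [DecidableEq α]
    [AddCommMonoid M] [PartialOrder M] [IsOrderedCancelAddMonoid M]
    (A : Finset α) (x y : α → M) :
    ∑ i ∈ A, (x i + y i) < ∑ i, y i ↔ ∑ i ∈ A, x i < ∑ j ∈ Aᶜ, y j := by
  rw [sum_add_distrib, ← sum_compl_add_sum A y, add_lt_add_iff_right]

theorem threshold_of_system_general (n : ℕ) (K : Set (Finset (Fin n)))
    (x y : Fin n → ℝ)
    (hx : ∀ i, 0 < x i) (hy : ∀ i, 0 < y i)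
    (h1 : ∀ S : Finset (Fin n), S ∉ K → ∑ i ∈ S, x i > ∑ j ∈ Sᶜ, y j)
    (h2 : ∀ T : Finset (Fin n), T ∈ K → ∑ i ∈ T, x i < ∑ j ∈ Tᶜ, y j) :
    (∀ i, 0 < x i + y i) ∧
    (∀ A : Finset (Fin n), A ∈ K ↔ ∑ i ∈ A, (x i + y i) < ∑ i, y i) := by
  refine ⟨fun i => add_pos (hx i) (hy i), fun A => ?_⟩
  rw [sum_add_lt_sum_iff_lt_sum_compl]
  exact ⟨h2 A, fun hlt => by_contra fun hA => (h1 A hA).asymm hlt⟩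

/-- If `x, y` are strictly positive and satisfy
`x(S) > y(Sᶜ)` for every non-face `S` and `x(T) < y(Tᶜ)` for every face `T`,
then with `z = x + y` one has `A ∈ K ↔ z(A) < y([n])` for every `A`; in
particular `K` is the threshold complex with strictly positive weights `z` and
quota `y([n])`. -/
theorem threshold_of_system (n : ℕ) (K : Set (Finset (Fin n)))
    (hK : IsComplex n K) (x y : Fin n → ℝ)
    (hx : ∀ i, 0 < x i) (hy : ∀ i, 0 < y i)
    (h1 : ∀ S : Finset (Fin n), S ∉ K → ∑ i ∈ S, x i > ∑ j ∈ Sᶜ, y j)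
    (h2 : ∀ T : Finset (Fin n), T ∈ K → ∑ i ∈ T, x i < ∑ j ∈ Tᶜ, y j) :
    (∀ i, 0 < x i + y i) ∧
    (∀ A : Finset (Fin n), A ∈ K ↔ ∑ i ∈ A, (x i + y i) < ∑ i, y i) :=
  threshold_of_system_general n K x y hx hy h1 h2
end

section
/- Let w : [n] → ℝ be strictly positive with w([n]) = 1, let 0 < q < 1 with w(A) ≠ q for every A ⊆ [n], and let K = {A ⊆ [n] : w(A) < q} be the corresponding threshold complex (assumed proper and without ghost vertices). Then the pair x, y : [n] → ℝ defined by x(i) = (1−q)·w(i) and y(i) = q·w(i) is a K-submodular function. -/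
open Finset

/-
Put `x = (1 - q) w` and `y = q w`. Since `w` sums to `1`, for every `S` one has
`x(S) - y(Sᶜ) = w(S) - q`. A ridge datum has `w(X1) < q < w(X1 ∪ {c1, c2})` (the second
inequality is strict because `q` is never a subset weight). The Λ-inequality is the identity for
`S = X1 ∪ {c1, c2}`, the V-inequality is the identity for `S = X1`, and the X-inequality reads
`x(c2) + y(c2) = w(c2) > 0`.
-/

section

variable {ι : Type*} [DecidableEq ι]

theorem sum_insert_insert_eq {X : Finset ι} {c1 c2 : ι} (h12 : c1 ≠ c2) (h1 : c1 ∉ X)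
    (h2 : c2 ∉ X) (f : ι → ℝ) :
    ∑ i ∈ insert c1 (insert c2 X), f i = ∑ i ∈ X, f i + f c1 + f c2 := by
  rw [Finset.sum_insert (by simp [h12, h1]), Finset.sum_insert h2]
  ring

variable [Fintype ι]

theorem sum_mul_sub_sum_compl_mul_eq {w : ι → ℝ} (hsum : ∑ i, w i = 1) (q : ℝ)
    (S : Finset ι) :
    ∑ i ∈ S, (1 - q) * w i - ∑ i ∈ Sᶜ, q * w i = ∑ i ∈ S, w i - q := by
  have hsplit := Finset.sum_add_sum_compl S w
  rw [← Finset.mul_sum, ← Finset.mul_sum]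
  linear_combination -q * hsplit - q * hsum

theorem sum_compl_insert_insert_eq {X : Finset ι} {c1 c2 : ι} (h12 : c1 ≠ c2) (h1 : c1 ∉ X)
    (h2 : c2 ∉ X) (f : ι → ℝ) :
    ∑ i ∈ (insert c1 (insert c2 X))ᶜ, f i + f c1 + f c2 = ∑ i ∈ Xᶜ, f i := by
  have hc2 : c2 ∈ Xᶜ := Finset.mem_compl.2 h2
  have hc1 : c1 ∈ Xᶜ.erase c2 := Finset.mem_erase.2 ⟨h12, Finset.mem_compl.2 h1⟩
  rw [Finset.compl_insert, Finset.compl_insert, Finset.sum_erase_add _ _ hc1,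
    Finset.sum_erase_add _ _ hc2]

end

theorem KSubmodular_of_threshold_general (n : ℕ) (w : Fin n → ℝ) (q : ℝ)
    (hw : ∀ i, 0 < w i) (hsum : ∑ i, w i = 1)
    (hne : ∀ A : Finset (Fin n), ∑ i ∈ A, w i ≠ q)
    (K : Set (Finset (Fin n))) (hKdef : K = {A : Finset (Fin n) | ∑ i ∈ A, w i < q}) :
    IsKSubmodular n K (fun i => (1 - q) * w i) (fun i => q * w i) := by
  subst hKdef
  intro X1 c1 c2 h12 h1 h2 hX1 hS
  have hX1 : ∑ i ∈ X1, w i < q := hX1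
  have hS : q < ∑ i ∈ insert c1 (insert c2 X1), w i :=
    (not_lt.1 hS).lt_of_ne (hne _).symm
  have hΛ := sum_mul_sub_sum_compl_mul_eq hsum q (insert c1 (insert c2 X1))
  have hV := sum_mul_sub_sum_compl_mul_eq hsum q X1
  rw [sum_insert_insert_eq h12 h1 h2] at hΛ
  rw [← sum_compl_insert_insert_eq h12 h1 h2] at hV
  refine ⟨fun _ _ => ?_, fun _ _ => ?_, fun _ _ => ?_⟩
  · linarith
  · linarith
  · linarith [hw c2]

/-- For strictly positive weights `w` with `w([n]) = 1`, a quota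
`0 < q < 1` with `w(A) ≠ q` for all `A`, and the threshold complex
`K = {A : w(A) < q}` (assumed proper and without ghost vertices), the pair
`x(i) = (1-q)·w(i)`, `y(i) = q·w(i)` is a K-submodular function. -/
theorem KSubmodular_of_threshold (n : ℕ) (w : Fin n → ℝ) (q : ℝ)
    (hw : ∀ i, 0 < w i) (hsum : ∑ i, w i = 1) (hq0 : 0 < q) (hq1 : q < 1)
    (hne : ∀ A : Finset (Fin n), ∑ i ∈ A, w i ≠ q)
    (K : Set (Finset (Fin n))) (hKdef : K = {A : Finset (Fin n) | ∑ i ∈ A, w i < q})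
    (hproper : K ≠ Set.univ) (hghost : NoGhost n K) :
    IsKSubmodular n K (fun i => (1 - q) * w i) (fun i => q * w i) :=
  KSubmodular_of_threshold_general n w q hw hsum hne K hKdef
end

section
/- Let K be a proper simplicial complex on [n] without ghost vertices which is roughly weighted with strictly positive weights w satisfying w([n]) = 1 and quota q with 0 < q < 1. Then the pair x, y : [n] → ℝ defined by x(i) = (1−q)·w(i) and y(i) = q·w(i) is a non-strict K-submodular function. In particular, for every Y ⊆ [n] with Y ∉ K one has (1−q)·w(Y) ≥ q·w(Yᶜ), and for every X ∈ K one has (1−q)·w(X) ≤ q·w(Xᶜ). -/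
open Finset

/-!
With `w([n]) = 1` one has `(1 - q)·w(X) - q·w(Xᶜ) = w(X) - q`, and rough weightedness says
exactly that this is `≤ 0` on faces and `≥ 0` on non-faces. The Λ-inequality of a ridge datum
is the non-face case for `X1 ∪ {c1, c2}`, the V-inequality is the face case for `X1`, and the
X-condition is positivity of `x` and `y`.
-/

section SumLemmas

variable {ι M : Type*} [DecidableEq ι]

lemma sum_insert_insert_of_notMem [AddCommMonoid M] (f : ι → M) {s : Finset ι} {c₁ c₂ : ι}
    (hne : c₁ ≠ c₂) (h₁ : c₁ ∉ s) (h₂ : c₂ ∉ s) :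
    ∑ i ∈ insert c₁ (insert c₂ s), f i = ∑ i ∈ s, f i + f c₁ + f c₂ := by
  rw [sum_insert (by simp [hne, h₁]), sum_insert h₂]
  abel

lemma sum_compl_insert_insert_add [Fintype ι] [AddCommGroup M] (f : ι → M) {s : Finset ι}
    {c₁ c₂ : ι} (hne : c₁ ≠ c₂) (h₁ : c₁ ∉ s) (h₂ : c₂ ∉ s) :
    ∑ i ∈ (insert c₁ (insert c₂ s))ᶜ, f i + f c₁ + f c₂ = ∑ i ∈ sᶜ, f i := by
  have hS := sum_add_sum_compl (insert c₁ (insert c₂ s)) f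
  rw [sum_insert_insert_of_notMem f hne h₁ h₂, ← sum_add_sum_compl s f] at hS
  rw [← add_left_cancel_iff (a := ∑ i ∈ s, f i), ← hS]
  abel

end SumLemmas

lemma isNonStrictKSubmodular_of_sum_compl_le {n : ℕ} {K : Set (Finset (Fin n))}
    {x y : Fin n → ℝ} (hx : ∀ i, 0 < x i) (hy : ∀ i, 0 < y i)
    (hnonface : ∀ Y ∉ K, ∑ i ∈ Yᶜ, y i ≤ ∑ i ∈ Y, x i)
    (hface : ∀ X ∈ K, ∑ i ∈ X, x i ≤ ∑ i ∈ Xᶜ, y i) :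
    IsNonStrictKSubmodular n K x y := by
  intro X₁ c₁ c₂ hne h₁ h₂ hX₁ hS
  refine ⟨fun _ _ => ?_, fun _ _ => ?_, fun _ _ => ⟨hx c₂, hy c₂⟩⟩
  · rw [← sum_insert_insert_of_notMem x hne h₁ h₂]
    exact hnonface _ hS
  · rw [sum_compl_insert_insert_add y hne h₁ h₂]
    exact hface _ hX₁

lemma one_sub_mul_sum_sub_mul_sum_compl {ι : Type*} [Fintype ι] [DecidableEq ι] {w : ι → ℝ}
    (hsum : ∑ i, w i = 1) (q : ℝ) (X : Finset ι) :
    (1 - q) * ∑ i ∈ X, w i - q * ∑ i ∈ Xᶜ, w i = ∑ i ∈ X, w i - q := by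
  have hX := sum_add_sum_compl X w
  rw [hsum] at hX
  linear_combination (-q) * hX

namespace RoughlyWeighted

variable {n : ℕ} {K : Set (Finset (Fin n))} {w : Fin n → ℝ} {q : ℝ}

lemma sum_le_of_mem (h : RoughlyWeighted n K w q) {X : Finset (Fin n)} (hX : X ∈ K) :
    ∑ i ∈ X, w i ≤ q :=
  le_of_not_gt fun hlt => (h.2.2 X).1 hlt hX

lemma le_sum_of_notMem (h : RoughlyWeighted n K w q) {Y : Finset (Fin n)} (hY : Y ∉ K) :
    q ≤ ∑ i ∈ Y, w i :=
  le_of_not_gt fun hlt => hY ((h.2.2 Y).2 hlt)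

lemma one_sub_mul_sum_le_of_mem (h : RoughlyWeighted n K w q) (hsum : ∑ i, w i = 1)
    {X : Finset (Fin n)} (hX : X ∈ K) :
    (1 - q) * ∑ i ∈ X, w i ≤ q * ∑ i ∈ Xᶜ, w i := by
  linarith [one_sub_mul_sum_sub_mul_sum_compl hsum q X, h.sum_le_of_mem hX]

lemma mul_sum_compl_le_of_notMem (h : RoughlyWeighted n K w q) (hsum : ∑ i, w i = 1)
    {Y : Finset (Fin n)} (hY : Y ∉ K) :
    q * ∑ i ∈ Yᶜ, w i ≤ (1 - q) * ∑ i ∈ Y, w i := by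
  linarith [one_sub_mul_sum_sub_mul_sum_compl hsum q Y, h.le_sum_of_notMem hY]

end RoughlyWeighted

theorem nonStrictKSubmodular_of_roughlyWeighted_general (n : ℕ) (K : Set (Finset (Fin n)))
    (w : Fin n → ℝ) (q : ℝ) (hrw : RoughlyWeighted n K w q)
    (hsum : ∑ i, w i = 1) (hq1 : q < 1) :
    IsNonStrictKSubmodular n K (fun i => (1 - q) * w i) (fun i => q * w i) ∧
    (∀ Y : Finset (Fin n), Y ∉ K →
      (1 - q) * ∑ i ∈ Y, w i ≥ q * ∑ i ∈ Yᶜ, w i) ∧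
    (∀ X : Finset (Fin n), X ∈ K →
      (1 - q) * ∑ i ∈ X, w i ≤ q * ∑ i ∈ Xᶜ, w i) := by
  have hnonface := fun Y (hY : Y ∉ K) => hrw.mul_sum_compl_le_of_notMem hsum hY
  have hface := fun X (hX : X ∈ K) => hrw.one_sub_mul_sum_le_of_mem hsum hX
  obtain ⟨hw, hq, -⟩ := hrw
  refine ⟨isNonStrictKSubmodular_of_sum_compl_le (fun i => mul_pos (sub_pos.2 hq1) (hw i))
    (fun i => mul_pos hq (hw i)) (fun Y hY => ?_) (fun X hX => ?_), hnonface, hface⟩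
  · simpa only [← mul_sum] using hnonface Y hY
  · simpa only [← mul_sum] using hface X hX

/-- If the proper simplicial complex `K` on `[n]` without ghost
vertices is roughly weighted with strictly positive weights `w`, `w([n]) = 1`,
and quota `0 < q < 1`, then `x(i) = (1-q)·w(i)`, `y(i) = q·w(i)` is a non-strict
K-submodular function; in particular `(1-q)·w(Y) ≥ q·w(Yᶜ)` for every non-face
`Y` and `(1-q)·w(X) ≤ q·w(Xᶜ)` for every face `X`. -/
theorem nonStrictKSubmodular_of_roughlyWeighted (n : ℕ) (K : Set (Finset (Fin n)))
    (hK : IsComplex n K) (hproper : K ≠ Set.univ) (hghost : NoGhost n K)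
    (w : Fin n → ℝ) (q : ℝ) (hrw : RoughlyWeighted n K w q)
    (hsum : ∑ i, w i = 1) (hq1 : q < 1) :
    IsNonStrictKSubmodular n K (fun i => (1 - q) * w i) (fun i => q * w i) ∧
    (∀ Y : Finset (Fin n), Y ∉ K →
      (1 - q) * ∑ i ∈ Y, w i ≥ q * ∑ i ∈ Yᶜ, w i) ∧
    (∀ X : Finset (Fin n), X ∈ K →
      (1 - q) * ∑ i ∈ X, w i ≤ q * ∑ i ∈ Xᶜ, w i) :=
  nonStrictKSubmodular_of_roughlyWeighted_general n K w q hrw hsum hq1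
end

section
/- Let K be a proper simplicial complex on [n] without ghost vertices. If K admits a non-strict K-submodular function, then K is roughly weighted with some strictly positive weights and positive quota. -/
open Finset

/- ===================== Auxiliary lemmas ===================== -/

namespace RWAux

variable {n : ℕ} {K : Set (Finset (Fin n))}

/-- Supersets of non-faces are non-faces. -/
lemma mono (hK : IsComplex n K) {A B : Finset (Fin n)} (hAB : A ⊆ B)
    (hA : A ∉ K) : B ∉ K := fun hB => hA (hK.2 A B hAB hB)

lemma univ_not_mem (hK : IsComplex n K) (hproper : K ≠ Set.univ) :
    (Finset.univ : Finset (Fin n)) ∉ K := by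
  intro h
  exact hproper (Set.eq_univ_iff_forall.2 fun A => hK.2 A _ (Finset.subset_univ A) h)

/-- Lemma (A): every face `F` satisfies `x(F) ≤ y(Fᶜ)`. -/
lemma lemA (hK : IsComplex n K)
    (huniv : (Finset.univ : Finset (Fin n)) ∉ K)
    (x y : Fin n → ℝ) (hxy : IsNonStrictKSubmodular n K x y)
    (hD1 : ∀ c : Fin n, ({c} : Finset (Fin n))ᶜ ∈ K →
      ∑ i ∈ ({c} : Finset (Fin n))ᶜ, x i ≤ y c)
    (hD2 : ∀ c : Fin n, ({c} : Finset (Fin n))ᶜ ∈ K → 0 ≤ x c + y c) :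
    ∀ F ∈ K, ∑ i ∈ F, x i ≤ ∑ i ∈ Fᶜ, y i := by
  classical
  suffices h : ∀ k : ℕ, ∀ F, F ∈ K → Fᶜ.card ≤ k → ∑ i ∈ F, x i ≤ ∑ i ∈ Fᶜ, y i by
    intro F hF; exact h Fᶜ.card F hF le_rfl
  intro k
  induction k with
  | zero =>
    intro F hF hc
    have h0 : Fᶜ = ∅ := Finset.card_eq_zero.1 (Nat.le_zero.1 hc)
    rw [Finset.compl_eq_empty_iff] at h0
    exact absurd (h0 ▸ hF) huniv
  | succ k ih =>
    intro F hF hc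
    by_cases hbl : ∃ d, d ∉ F ∧ insert d F ∉ K
    · obtain ⟨d, hdF, hdbl⟩ := hbl
      by_cases hbl2 : ∃ e, e ∉ F ∧ e ≠ d ∧ insert e F ∈ K
      · obtain ⟨e, heF, hed, heK⟩ := hbl2
        have hdbl2 : insert d (insert e F) ∉ K :=
          mono hK (Finset.insert_subset_insert d (Finset.subset_insert e F)) hdbl
        have hx := (hxy F d e (fun h => hed h.symm) hdF heF hF hdbl2).2.2 heK hdbl
        have hmemc : e ∈ Fᶜ := Finset.mem_compl.2 heF
        have hIH : ∑ i ∈ insert e F, x i ≤ ∑ i ∈ (insert e F)ᶜ, y i := by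
          apply ih _ heK
          rw [Finset.compl_insert, Finset.card_erase_of_mem hmemc]
          omega
        rw [Finset.sum_insert heF, Finset.compl_insert,
          Finset.sum_erase_eq_sub hmemc] at hIH
        linarith [hx.1, hx.2]
      · push_neg at hbl2
        by_cases hex : ∃ e, e ∉ F ∧ e ≠ d
        · obtain ⟨e, heF, hed⟩ := hex
          have heB := hbl2 e heF hed
          have hdbl2 : insert d (insert e F) ∉ K :=
            mono hK (Finset.subset_insert d _) heB
          have hv := (hxy F d e (fun h => hed h.symm) hdF heF hF hdbl2).2.1 hdbl heB
          rw [Finset.compl_insert, Finset.compl_insert] at hv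
          have he' : e ∈ Fᶜ := Finset.mem_compl.2 heF
          have hd' : d ∈ Fᶜ.erase e := Finset.mem_erase.2 ⟨Ne.symm hed, Finset.mem_compl.2 hdF⟩
          rw [Finset.sum_erase_eq_sub hd', Finset.sum_erase_eq_sub he'] at hv
          linarith
        · push_neg at hex
          have hFc : Fᶜ = {d} := by
            ext a
            simp only [Finset.mem_compl, Finset.mem_singleton]
            constructor
            · intro ha; exact hex a ha
            · intro ha; rw [ha]; exact hdF
          have hFeq : F = ({d} : Finset (Fin n))ᶜ := by
            rw [← hFc, compl_compl]
          have hh := hD1 d (by rw [← hFeq]; exact hF)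
          rw [← hFeq] at hh
          rw [hFc, Finset.sum_singleton]
          exact hh
    · push_neg at hbl
      by_cases hpos : ∃ e, e ∉ F ∧ 0 ≤ x e + y e
      · obtain ⟨e, heF, hpe⟩ := hpos
        have heK := hbl e heF
        have hmemc : e ∈ Fᶜ := Finset.mem_compl.2 heF
        have hIH : ∑ i ∈ insert e F, x i ≤ ∑ i ∈ (insert e F)ᶜ, y i := by
          apply ih _ heK
          rw [Finset.compl_insert, Finset.card_erase_of_mem hmemc]
          omega
        rw [Finset.sum_insert heF, Finset.compl_insert,
          Finset.sum_erase_eq_sub hmemc] at hIH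
        linarith
      · push_neg at hpos
        exfalso
        set Fam : Finset (Finset (Fin n)) :=
          Finset.univ.filter (fun B => F ⊆ B ∧ B ∈ K ∧ ∀ e, e ∉ B → insert e B ∈ K)
          with hFamdef
        have hFmem : F ∈ Fam := by
          rw [hFamdef]
          exact Finset.mem_filter.2 ⟨Finset.mem_univ _, Finset.Subset.refl F, hF, hbl⟩
        obtain ⟨B, hBmem, hBmax⟩ : ∃ B ∈ Fam, ∀ x ∈ Fam, ¬ B < x := by
          obtain ⟨B, hB⟩ := Finset.exists_maximal ⟨F, hFmem⟩
          exact ⟨B, hB.1, fun x hx hlt => lt_irrefl _ (lt_of_lt_of_le hlt (hB.2 hx hlt.le))⟩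
        obtain ⟨hFB, hBK, hBopen⟩ := (Finset.mem_filter.1 hBmem).2
        have hBuniv : B ≠ Finset.univ := fun h => huniv (h ▸ hBK)
        obtain ⟨e, heB⟩ : ∃ e, e ∉ B := by
          by_contra h
          push_neg at h
          exact hBuniv (Finset.eq_univ_iff_forall.2 h)
        have hEK : insert e B ∈ K := hBopen e heB
        have hEnot : insert e B ∉ Fam := fun h => hBmax _ h (Finset.ssubset_insert heB)
        obtain ⟨f, hfE, hfbl⟩ : ∃ f, f ∉ insert e B ∧ insert f (insert e B) ∉ K := by
          by_contra h
          push_neg at h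
          exact hEnot (Finset.mem_filter.2 ⟨Finset.mem_univ _,
            hFB.trans (Finset.subset_insert e B), hEK, h⟩)
        have hallbl : ∀ g, g ∉ insert e B → insert g (insert e B) ∉ K := by
          intro g hgE hgK
          have hgf : g ≠ f := fun h => hfbl (h ▸ hgK)
          have hdbl : insert f (insert g (insert e B)) ∉ K :=
            mono hK (Finset.insert_subset_insert f (Finset.subset_insert g _)) hfbl
          have hxg := (hxy (insert e B) f g (fun h => hgf h.symm) hfE hgE hEK hdbl).2.2 hgK hfbl
          have hgF : g ∉ F := fun h => hgE (Finset.mem_insert_of_mem (hFB h))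
          linarith [hpos g hgF, hxg.1, hxg.2]
        have hfB : f ∉ B := fun h => hfE (Finset.mem_insert_of_mem h)
        have hfe : f ≠ e := fun h => hfE (h ▸ Finset.mem_insert_self e B)
        have hfK : insert f B ∈ K := hBopen f hfB
        have hef : e ≠ f := fun h => hfe h.symm
        have hdblL : insert e (insert f B) ∉ K := by
          rw [Finset.insert_comm]; exact hfbl
        have hL := (hxy B e f hef heB hfB hBK hdblL).1 hEK hfK
        rw [Finset.insert_comm] at hL
        rw [Finset.compl_insert] at hL
        have hfc : f ∈ (insert e B)ᶜ := Finset.mem_compl.2 hfE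
        rw [Finset.sum_erase_eq_sub hfc] at hL
        have hfF : f ∉ F := fun h => hfE (Finset.mem_insert_of_mem (hFB h))
        by_cases hsing : ∃ g, g ∉ insert e B ∧ g ≠ f
        · obtain ⟨g, hgE, hgf⟩ := hsing
          have hdblV : insert g (insert f (insert e B)) ∉ K :=
            mono hK (Finset.subset_insert g _) hfbl
          have hV := (hxy (insert e B) g f hgf hgE hfE hEK hdblV).2.1 (hallbl g hgE) hfbl
          rw [Finset.compl_insert, Finset.compl_insert] at hV
          have hgc : g ∈ ((insert e B)ᶜ).erase f :=
            Finset.mem_erase.2 ⟨hgf, Finset.mem_compl.2 hgE⟩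
          rw [Finset.sum_erase_eq_sub hgc, Finset.sum_erase_eq_sub hfc,
            Finset.sum_insert heB] at hV
          linarith [hpos f hfF]
        · push_neg at hsing
          have hfc2 : ({f} : Finset (Fin n))ᶜ = insert e B := by
            ext a
            simp only [Finset.mem_compl, Finset.mem_singleton]
            constructor
            · intro ha
              by_contra h
              exact ha (hsing a h)
            · intro ha h
              exact hfE (h ▸ ha)
          have := hD2 f (hfc2 ▸ hEK)
          linarith [hpos f hfF]

/-- Lemma (B): every non-face `G` satisfies `y(Gᶜ) ≤ x(G)`. -/
lemma lemB (hK : IsComplex n K) (hghost : NoGhost n K)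
    (x y : Fin n → ℝ) (hxy : IsNonStrictKSubmodular n K x y)
    (hA : ∀ F ∈ K, ∑ i ∈ F, x i ≤ ∑ i ∈ Fᶜ, y i) :
    ∀ G, G ∉ K → ∑ i ∈ Gᶜ, y i ≤ ∑ i ∈ G, x i := by
  classical
  suffices h : ∀ s : ℕ, ∀ G, G ∉ K → G.card ≤ s → ∑ i ∈ Gᶜ, y i ≤ ∑ i ∈ G, x i by
    intro G hG; exact h G.card G hG le_rfl
  intro s
  induction s with
  | zero =>
    intro G hG hc
    have h0 : G = ∅ := Finset.card_eq_zero.1 (Nat.le_zero.1 hc)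
    subst h0
    exact absurd hK.1 hG
  | succ s ih =>
    intro G hG hc
    by_cases hrem : ∃ e ∈ G, G.erase e ∈ K
    · obtain ⟨e, heG, heK⟩ := hrem
      by_cases hnonrem : ∃ f ∈ G, G.erase f ∉ K
      · obtain ⟨f, hfG, hfNK⟩ := hnonrem
        have hef : e ≠ f := fun h => hfNK (h ▸ heK)
        have hfe' : f ∈ G.erase e := Finset.mem_erase.2 ⟨Ne.symm hef, hfG⟩
        have heGf : e ∈ G.erase f := Finset.mem_erase.2 ⟨hef, heG⟩
        have hX1e : e ∉ (G.erase e).erase f := by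
          rw [Finset.erase_right_comm]; exact Finset.notMem_erase e _
        have hX1f : f ∉ (G.erase e).erase f := Finset.notMem_erase f _
        have hX1K : (G.erase e).erase f ∈ K := hK.2 _ _ (Finset.erase_subset f _) heK
        have hins_f : insert f ((G.erase e).erase f) = G.erase e := Finset.insert_erase hfe'
        have hins_e : insert e ((G.erase e).erase f) = G.erase f := by
          rw [Finset.erase_right_comm]; exact Finset.insert_erase heGf
        have hdbl : insert e (insert f ((G.erase e).erase f)) ∉ K := by
          rw [hins_f, Finset.insert_erase heG]; exact hG
        have hxc := (hxy _ e f hef hX1e hX1f hX1K hdbl).2.2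
          (by rw [hins_f]; exact heK) (by rw [hins_e]; exact hfNK)
        have hIH := ih (G.erase f) hfNK (by rw [Finset.card_erase_of_mem hfG]; omega)
        rw [Finset.compl_erase, Finset.sum_insert (Finset.notMem_compl.2 hfG),
          Finset.sum_erase_eq_sub hfG] at hIH
        linarith [hxc.1, hxc.2]
      · push_neg at hnonrem
        have hGne : G.Nonempty := Finset.nonempty_iff_ne_empty.2
          (fun h => hG (h ▸ hK.1))
        obtain ⟨a, haG⟩ := hGne
        obtain ⟨b, hbG, hba⟩ : ∃ b ∈ G, b ≠ a := by
          by_contra h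
          push_neg at h
          have hGa : G = {a} := by
            ext c
            simp only [Finset.mem_singleton]
            exact ⟨fun hcg => h c hcg, fun hcg => hcg ▸ haG⟩
          exact hG (hGa ▸ hghost a)
        have hab : a ≠ b := Ne.symm hba
        have hbGa : b ∈ G.erase a := Finset.mem_erase.2 ⟨hba, hbG⟩
        have haGb : a ∈ G.erase b := Finset.mem_erase.2 ⟨hab, haG⟩
        have hX1a : a ∉ (G.erase a).erase b := by
          rw [Finset.erase_right_comm]; exact Finset.notMem_erase a _
        have hX1b : b ∉ (G.erase a).erase b := Finset.notMem_erase b _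
        have hX1K : (G.erase a).erase b ∈ K :=
          hK.2 _ _ (Finset.erase_subset b _) (hnonrem a haG)
        have hins_b : insert b ((G.erase a).erase b) = G.erase a := Finset.insert_erase hbGa
        have hins_a : insert a ((G.erase a).erase b) = G.erase b := by
          rw [Finset.erase_right_comm]; exact Finset.insert_erase haGb
        have hdbl : insert a (insert b ((G.erase a).erase b)) ∉ K := by
          rw [hins_b, Finset.insert_erase haG]; exact hG
        have hL := (hxy _ a b hab hX1a hX1b hX1K hdbl).1
          (by rw [hins_a]; exact hnonrem b hbG) (by rw [hins_b]; exact hnonrem a haG)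
        have hGeq : insert a (insert b ((G.erase a).erase b)) = G := by
          rw [hins_b, Finset.insert_erase haG]
        rw [hGeq] at hL
        have hsX1 : ∑ i ∈ (G.erase a).erase b, x i = ∑ i ∈ G, x i - x a - x b := by
          rw [Finset.sum_erase_eq_sub hbGa, Finset.sum_erase_eq_sub haG]
        linarith
    · push_neg at hrem
      by_cases hpos : ∃ e ∈ G, 0 ≤ x e + y e
      · obtain ⟨e, heG, hpe⟩ := hpos
        have hIH := ih (G.erase e) (hrem e heG)
          (by rw [Finset.card_erase_of_mem heG]; omega)
        rw [Finset.compl_erase, Finset.sum_insert (Finset.notMem_compl.2 heG),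
          Finset.sum_erase_eq_sub heG] at hIH
        linarith
      · push_neg at hpos
        exfalso
        set Fam : Finset (Finset (Fin n)) :=
          Finset.univ.filter (fun H => H ⊆ G ∧ H ∉ K ∧ ∀ e ∈ H, H.erase e ∉ K)
          with hFamdef
        have hGmem : G ∈ Fam := by
          rw [hFamdef]
          exact Finset.mem_filter.2 ⟨Finset.mem_univ _, Finset.Subset.refl G, hG, hrem⟩
        obtain ⟨B, hBmem, hBmin⟩ : ∃ B ∈ Fam, ∀ x ∈ Fam, ¬ x < B := by
          obtain ⟨B, hB⟩ := Finset.exists_minimal ⟨G, hGmem⟩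
          exact ⟨B, hB.1, fun x hx hlt => lt_irrefl _ (lt_of_lt_of_le hlt (hB.2 hx hlt.le))⟩
        obtain ⟨hBG, hBNK, hBall⟩ := (Finset.mem_filter.1 hBmem).2
        have hBne : B.Nonempty := Finset.nonempty_iff_ne_empty.2
          (fun h => hBNK (h ▸ hK.1))
        obtain ⟨e, heB⟩ := hBne
        have hHNK : B.erase e ∉ K := hBall e heB
        have hHG : B.erase e ⊆ G := (Finset.erase_subset e B).trans hBG
        have hHnot : B.erase e ∉ Fam := fun h => hBmin _ h (Finset.erase_ssubset heB)
        obtain ⟨f, hfH, hfK⟩ : ∃ f ∈ B.erase e, (B.erase e).erase f ∈ K := by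
          by_contra h
          push_neg at h
          exact hHnot (Finset.mem_filter.2 ⟨Finset.mem_univ _, hHG, hHNK, h⟩)
        have hallrem : ∀ g ∈ B.erase e, (B.erase e).erase g ∈ K := by
          intro g hgH
          by_contra hgNK
          have hgf : g ≠ f := fun h => hgNK (h ▸ hfK)
          have hgHf : g ∈ (B.erase e).erase f := Finset.mem_erase.2 ⟨hgf, hgH⟩
          have hfHg : f ∈ (B.erase e).erase g := Finset.mem_erase.2 ⟨Ne.symm hgf, hfH⟩
          have hX1g : g ∉ ((B.erase e).erase f).erase g := Finset.notMem_erase g _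
          have hX1f : f ∉ ((B.erase e).erase f).erase g := by
            rw [Finset.erase_right_comm]; exact Finset.notMem_erase f _
          have hX1K : ((B.erase e).erase f).erase g ∈ K :=
            hK.2 _ _ (Finset.erase_subset g _) hfK
          have hins_g : insert g (((B.erase e).erase f).erase g) = (B.erase e).erase f :=
            Finset.insert_erase hgHf
          have hins_f : insert f (((B.erase e).erase f).erase g) = (B.erase e).erase g := by
            rw [Finset.erase_right_comm]; exact Finset.insert_erase hfHg
          have hdbl : insert f (insert g (((B.erase e).erase f).erase g)) ∉ K := by
            rw [hins_g, Finset.insert_erase hfH]; exact hHNK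
          have hxg := (hxy _ f g (Ne.symm hgf) hX1f hX1g hX1K hdbl).2.2
            (by rw [hins_g]; exact hfK) (by rw [hins_f]; exact hgNK)
          have hgG : g ∈ G := hHG hgH
          linarith [hpos g hgG, hxg.1, hxg.2]
        have hHne : (B.erase e).Nonempty := Finset.nonempty_iff_ne_empty.2
          (fun h => hHNK (h ▸ hK.1))
        obtain ⟨a, haH⟩ := hHne
        obtain ⟨b, hbH, hba⟩ : ∃ b ∈ B.erase e, b ≠ a := by
          by_contra h
          push_neg at h
          have hHa : B.erase e = {a} := by
            ext c
            simp only [Finset.mem_singleton]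
            exact ⟨fun hcg => h c hcg, fun hcg => hcg ▸ haH⟩
          exact hHNK (hHa ▸ hghost a)
        have hab : a ≠ b := Ne.symm hba
        have hbHa : b ∈ (B.erase e).erase a := Finset.mem_erase.2 ⟨hba, hbH⟩
        have haHb : a ∈ (B.erase e).erase b := Finset.mem_erase.2 ⟨hab, haH⟩
        have hX1a : a ∉ ((B.erase e).erase a).erase b := by
          rw [Finset.erase_right_comm]; exact Finset.notMem_erase a _
        have hX1b : b ∉ ((B.erase e).erase a).erase b := Finset.notMem_erase b _
        have hX1K : ((B.erase e).erase a).erase b ∈ K :=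
          hK.2 _ _ (Finset.erase_subset b _) (hallrem a haH)
        have hins_b : insert b (((B.erase e).erase a).erase b) = (B.erase e).erase a :=
          Finset.insert_erase hbHa
        have hins_a : insert a (((B.erase e).erase a).erase b) = (B.erase e).erase b := by
          rw [Finset.erase_right_comm]; exact Finset.insert_erase haHb
        have hdbl : insert a (insert b (((B.erase e).erase a).erase b)) ∉ K := by
          rw [hins_b, Finset.insert_erase haH]; exact hHNK
        have hL := (hxy _ a b hab hX1a hX1b hX1K hdbl).1
          (by rw [hins_a]; exact hallrem b hbH) (by rw [hins_b]; exact hallrem a haH)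
        have hHeq : insert a (insert b (((B.erase e).erase a).erase b)) = B.erase e := by
          rw [hins_b, Finset.insert_erase haH]
        rw [hHeq] at hL
        have hsX1 : ∑ i ∈ ((B.erase e).erase a).erase b, x i
            = ∑ i ∈ B.erase e, x i - x a - x b := by
          rw [Finset.sum_erase_eq_sub hbHa, Finset.sum_erase_eq_sub haH]
        have hAface := hA ((B.erase e).erase a) (hallrem a haH)
        rw [Finset.compl_erase, Finset.sum_insert (Finset.notMem_compl.2 haH),
          Finset.sum_erase_eq_sub haH] at hAface
        have haG : a ∈ G := hHG haH
        linarith [hpos a haG]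

/-- Lemma (K5): all coordinates of `x + y` are nonnegative. -/
lemma lemK5 (hK : IsComplex n K)
    (huniv : (Finset.univ : Finset (Fin n)) ∉ K)
    (x y : Fin n → ℝ) (hxy : IsNonStrictKSubmodular n K x y)
    (hA : ∀ F ∈ K, ∑ i ∈ F, x i ≤ ∑ i ∈ Fᶜ, y i)
    (hB : ∀ G, G ∉ K → ∑ i ∈ Gᶜ, y i ≤ ∑ i ∈ G, x i) :
    ∀ c, 0 ≤ x c + y c := by
  classical
  intro c
  by_cases hc : ∃ A, A ∈ K ∧ c ∉ A ∧ insert c A ∉ K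
  · obtain ⟨A, hAK, hcA, hcins⟩ := hc
    have h1 := hB _ hcins
    have h2 := hA A hAK
    rw [Finset.compl_insert, Finset.sum_erase_eq_sub (Finset.mem_compl.2 hcA),
      Finset.sum_insert hcA] at h1
    linarith
  · push_neg at hc
    set Fam : Finset (Finset (Fin n)) := Finset.univ.filter (fun H => H ∉ K) with hFamdef
    have hFne : Fam.Nonempty :=
      ⟨Finset.univ, by rw [hFamdef]; exact Finset.mem_filter.2 ⟨Finset.mem_univ _, huniv⟩⟩
    obtain ⟨M, hMmem, hMmin⟩ : ∃ M ∈ Fam, ∀ x ∈ Fam, ¬ x < M := by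
      obtain ⟨M, hB⟩ := Finset.exists_minimal hFne
      exact ⟨M, hB.1, fun x hx hlt => lt_irrefl _ (lt_of_lt_of_le hlt (hB.2 hx hlt.le))⟩
    have hMnK : M ∉ K := (Finset.mem_filter.1 hMmem).2
    have hMK : ∀ e ∈ M, M.erase e ∈ K := by
      intro e he
      by_contra hco
      exact hMmin _ (Finset.mem_filter.2 ⟨Finset.mem_univ _, hco⟩) (Finset.erase_ssubset he)
    by_cases hcM : c ∈ M
    · have : M ∈ K := by
        rw [← Finset.insert_erase hcM]
        exact hc _ (hMK c hcM) (Finset.notMem_erase c M)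
      exact absurd this hMnK
    · have hMne : M.Nonempty := Finset.nonempty_iff_ne_empty.2 (fun h => hMnK (h ▸ hK.1))
      obtain ⟨e, heM⟩ := hMne
      have hcMe : c ∉ M.erase e := fun h => hcM (Finset.mem_of_mem_erase h)
      have hec : e ≠ c := fun h => hcM (h ▸ heM)
      have hdbl : insert e (insert c (M.erase e)) ∉ K := by
        rw [Finset.insert_comm, Finset.insert_erase heM]
        exact mono hK (Finset.subset_insert c M) hMnK
      have hxc := (hxy (M.erase e) e c hec (Finset.notMem_erase e M) hcMe
        (hMK e heM) hdbl).2.2 (hc _ (hMK e heM) hcMe)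
        (by rw [Finset.insert_erase heM]; exact hMnK)
      linarith [hxc.1, hxc.2]

/-- Strictness lemma: there is no pair (face `F`, non-face `G`) with
`y(Gᶜ) = x(G)` and `|G ∩ Z| < |F ∩ Z|`, where `Z` is the zero set of `x + y`. -/
lemma lemC (hK : IsComplex n K)
    (x y : Fin n → ℝ) (hxy : IsNonStrictKSubmodular n K x y)
    (hB : ∀ G, G ∉ K → ∑ i ∈ Gᶜ, y i ≤ ∑ i ∈ G, x i)
    (hK5 : ∀ c, 0 ≤ x c + y c)
    (Z : Finset (Fin n)) (hZ : ∀ i, i ∈ Z ↔ x i + y i = 0) :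
    ∀ (m : ℕ) (F G : Finset (Fin n)), F ∈ K → G ∉ K → (G \ F).card ≤ m →
      (∑ i ∈ Gᶜ, y i) = ∑ i ∈ G, x i → (G ∩ Z).card < (F ∩ Z).card → False := by
  classical
  intro m
  induction m with
  | zero =>
    intro F G hF hG hcard _ _
    have h0 : G \ F = ∅ := Finset.card_eq_zero.1 (Nat.le_zero.1 hcard)
    exact hG (hK.2 G F (Finset.sdiff_eq_empty_iff_subset.1 h0) hF)
  | succ m ih =>
    intro F G hF hG hcard hphi hZc
    set Fam : Finset (Finset (Fin n)) :=
      Finset.univ.filter (fun H => H ⊆ G ∧ H ∉ K) with hFamdef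
    have hGmem : G ∈ Fam := by
      rw [hFamdef]
      exact Finset.mem_filter.2 ⟨Finset.mem_univ _, Finset.Subset.refl G, hG⟩
    obtain ⟨M, hMmem, hMmin⟩ : ∃ M ∈ Fam, ∀ x ∈ Fam, ¬ x < M := by
      obtain ⟨M, hB⟩ := Finset.exists_minimal ⟨G, hGmem⟩
      exact ⟨M, hB.1, fun x hx hlt => lt_irrefl _ (lt_of_lt_of_le hlt (hB.2 hx hlt.le))⟩
    obtain ⟨hMG, hMnK⟩ := (Finset.mem_filter.1 hMmem).2
    have hMK : ∀ e ∈ M, M.erase e ∈ K := by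
      intro e he
      by_contra hco
      exact hMmin _ (Finset.mem_filter.2 ⟨Finset.mem_univ _,
        (Finset.erase_subset e M).trans hMG, hco⟩) (Finset.erase_ssubset he)
    have hBM : ∑ i ∈ Mᶜ, y i ≤ ∑ i ∈ M, x i := hB M hMnK
    have hxs : ∑ i ∈ G \ M, x i + ∑ i ∈ M, x i = ∑ i ∈ G, x i := Finset.sum_sdiff hMG
    have hys : ∑ i ∈ G \ M, y i + ∑ i ∈ Gᶜ, y i = ∑ i ∈ Mᶜ, y i := by
      have hsub : Gᶜ ⊆ Mᶜ := Finset.compl_subset_compl.2 hMG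
      have hMc : Mᶜ \ Gᶜ = G \ M := by
        ext a
        simp only [Finset.mem_sdiff, Finset.mem_compl]
        tauto
      rw [← hMc]
      exact Finset.sum_sdiff hsub
    have hnn : ∀ i ∈ G \ M, 0 ≤ x i + y i := fun i _ => hK5 i
    have hsum0 : ∑ i ∈ G \ M, (x i + y i) = 0 := by
      have hle : ∑ i ∈ G \ M, (x i + y i) ≤ 0 := by
        rw [Finset.sum_add_distrib]
        linarith
      have hge : 0 ≤ ∑ i ∈ G \ M, (x i + y i) := Finset.sum_nonneg hnn
      linarith
    have hphiM : ∑ i ∈ Mᶜ, y i = ∑ i ∈ M, x i := by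
      rw [Finset.sum_add_distrib] at hsum0
      linarith
    have hMZc : (M ∩ Z).card < (F ∩ Z).card :=
      lt_of_le_of_lt (Finset.card_le_card
        (Finset.inter_subset_inter hMG (Finset.Subset.refl Z))) hZc
    by_cases hMF : M \ F = ∅
    · exact hMnK (hK.2 M F (Finset.sdiff_eq_empty_iff_subset.1 hMF) hF)
    · obtain ⟨e, he⟩ := Finset.nonempty_iff_ne_empty.2 hMF
      have heM : e ∈ M := (Finset.mem_sdiff.1 he).1
      have heF : e ∉ F := (Finset.mem_sdiff.1 he).2
      obtain ⟨i, hiFZ, hiM'⟩ : ∃ i ∈ F ∩ Z, i ∉ M ∩ Z := by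
        by_contra h
        push_neg at h
        exact absurd (Finset.card_le_card h) (not_le.2 hMZc)
      have hiF : i ∈ F := (Finset.mem_inter.1 hiFZ).1
      have hiZ : i ∈ Z := (Finset.mem_inter.1 hiFZ).2
      have hiM : i ∉ M := fun h => hiM' (Finset.mem_inter.2 ⟨h, hiZ⟩)
      have hie : i ≠ e := fun h => hiM (h ▸ heM)
      have hMeK : M.erase e ∈ K := hMK e heM
      have hiMe : i ∉ M.erase e := fun h => hiM (Finset.mem_of_mem_erase h)
      have hiw : x i + y i = 0 := (hZ i).1 hiZ
      by_cases hins : insert i (M.erase e) ∈ K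
      · have hdbl : insert e (insert i (M.erase e)) ∉ K := by
          rw [Finset.insert_comm, Finset.insert_erase heM]
          exact mono hK (Finset.subset_insert i M) hMnK
        have hxc := (hxy (M.erase e) e i (Ne.symm hie) (Finset.notMem_erase e M)
          hiMe hMeK hdbl).2.2 hins (by rw [Finset.insert_erase heM]; exact hMnK)
        linarith [hxc.1, hxc.2]
      · have hB' := hB _ hins
        have hsx : ∑ j ∈ insert i (M.erase e), x j = x i + (∑ j ∈ M, x j - x e) := by
          rw [Finset.sum_insert hiMe, Finset.sum_erase_eq_sub heM]
        have hsy : ∑ j ∈ (insert i (M.erase e))ᶜ, y j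
            = (y e + ∑ j ∈ Mᶜ, y j) - y i := by
          rw [Finset.compl_insert, Finset.compl_erase]
          rw [Finset.sum_erase_eq_sub
            (show i ∈ insert e Mᶜ from Finset.mem_insert_of_mem (Finset.mem_compl.2 hiM))]
          rw [Finset.sum_insert (Finset.notMem_compl.2 heM)]
        have hwe : x e + y e = 0 := by
          refine le_antisymm ?_ (hK5 e)
          rw [hsx, hsy] at hB'
          linarith
        have hphi' : ∑ j ∈ (insert i (M.erase e))ᶜ, y j
            = ∑ j ∈ insert i (M.erase e), x j := by
          rw [hsx, hsy]
          linarith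
        have heZ : e ∈ Z := (hZ e).2 hwe
        have heMZ : e ∈ M ∩ Z := Finset.mem_inter.2 ⟨heM, heZ⟩
        have hiMZ : i ∉ (M ∩ Z).erase e :=
          fun h => hiM (Finset.mem_inter.1 (Finset.mem_of_mem_erase h)).1
        have hG'Z : insert i (M.erase e) ∩ Z = insert i ((M ∩ Z).erase e) := by
          ext j
          simp only [Finset.mem_inter, Finset.mem_insert, Finset.mem_erase]
          constructor
          · rintro ⟨hj | ⟨hj1, hj2⟩, hjZ⟩
            · exact Or.inl hj
            · exact Or.inr ⟨hj1, ⟨hj2, hjZ⟩⟩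
          · rintro (rfl | ⟨hne, hjM, hjZ⟩)
            · exact ⟨Or.inl rfl, hiZ⟩
            · exact ⟨Or.inr ⟨hne, hjM⟩, hjZ⟩
        have hcZ : (insert i (M.erase e) ∩ Z).card = (M ∩ Z).card := by
          rw [hG'Z, Finset.card_insert_of_notMem hiMZ, Finset.card_erase_of_mem heMZ]
          have hpos : 0 < (M ∩ Z).card := Finset.card_pos.2 ⟨e, heMZ⟩
          omega
        have hsub : insert i (M.erase e) \ F ⊆ (M \ F).erase e := by
          intro j hj
          obtain ⟨hj1, hj2⟩ := Finset.mem_sdiff.1 hj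
          rcases Finset.mem_insert.1 hj1 with rfl | hj1
          · exact absurd hiF hj2
          · exact Finset.mem_erase.2 ⟨(Finset.mem_erase.1 hj1).1,
              Finset.mem_sdiff.2 ⟨(Finset.mem_erase.1 hj1).2, hj2⟩⟩
        have hcd : (insert i (M.erase e) \ F).card ≤ m := by
          have h1 := Finset.card_le_card hsub
          have h2 : ((M \ F).erase e).card = (M \ F).card - 1 :=
            Finset.card_erase_of_mem he
          have h3 : (M \ F).card ≤ (G \ F).card :=
            Finset.card_le_card (Finset.sdiff_subset_sdiff hMG (Finset.Subset.refl F))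
          have h4 : 0 < (M \ F).card := Finset.card_pos.2 ⟨e, he⟩
          omega
        exact ih F (insert i (M.erase e)) hF hins hcd hphi' (by rw [hcZ]; exact hMZc)

/-- The main construction, under the additional hypotheses that the weights of
co-singleton faces have been fixed up. -/
lemma main (hK : IsComplex n K)
    (huniv : (Finset.univ : Finset (Fin n)) ∉ K) (hghost : NoGhost n K)
    (x y : Fin n → ℝ) (hxy : IsNonStrictKSubmodular n K x y)
    (hD1 : ∀ c : Fin n, ({c} : Finset (Fin n))ᶜ ∈ K →
      ∑ i ∈ ({c} : Finset (Fin n))ᶜ, x i ≤ y c)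
    (hD2 : ∀ c : Fin n, ({c} : Finset (Fin n))ᶜ ∈ K → 0 ≤ x c + y c) :
    ∃ (w : Fin n → ℝ) (q : ℝ), RoughlyWeighted n K w q := by
  classical
  have hA := lemA hK huniv x y hxy hD1 hD2
  have hB := lemB hK hghost x y hxy hA
  have hK5 := lemK5 hK huniv x y hxy hA hB
  set Z : Finset (Fin n) := Finset.univ.filter (fun i => x i + y i = 0) with hZdef
  have hZiff : ∀ i, i ∈ Z ↔ x i + y i = 0 := by
    intro i
    rw [hZdef]
    simp [Finset.mem_filter]
  have hCs := lemC hK x y hxy hB hK5 Z hZiff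
  set P : Finset (Finset (Fin n) × Finset (Fin n)) :=
    Finset.univ.filter (fun p => p.1 ∈ K ∧ p.2 ∉ K ∧ (p.2 ∩ Z).card < (p.1 ∩ Z).card)
    with hPdef
  set g : Finset (Fin n) × Finset (Fin n) → ℝ :=
    fun p => (∑ i ∈ p.2, x i + ∑ i ∈ p.2, y i) - (∑ i ∈ p.1, x i + ∑ i ∈ p.1, y i)
    with hgdef
  have hgpos : ∀ p ∈ P, 0 < g p := by
    intro p hp
    rw [hPdef] at hp
    obtain ⟨-, hF, hG, hcard⟩ := Finset.mem_filter.1 hp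
    have h1 : ∑ i ∈ p.1, x i ≤ ∑ i ∈ p.1ᶜ, y i := hA _ hF
    have h2 : ∑ i ∈ p.2ᶜ, y i ≤ ∑ i ∈ p.2, x i := hB _ hG
    have h3 : ∑ i ∈ p.2ᶜ, y i ≠ ∑ i ∈ p.2, x i :=
      fun h => hCs (p.2 \ p.1).card p.1 p.2 hF hG le_rfl h hcard
    have e1 := Finset.sum_add_sum_compl p.1 y
    have e2 := Finset.sum_add_sum_compl p.2 y
    have h4 : ∑ i ∈ p.2ᶜ, y i < ∑ i ∈ p.2, x i := lt_of_le_of_ne h2 h3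
    rw [hgdef]
    simp only
    linarith
  obtain ⟨ε, hε, hεgap⟩ : ∃ ε : ℝ, 0 < ε ∧ ∀ p ∈ P, ε * ((n : ℝ) + 1) ≤ g p := by
    by_cases hP : P.Nonempty
    · refine ⟨P.inf' hP g / ((n : ℝ) + 1), ?_, ?_⟩
      · apply div_pos ?_ (by positivity)
        obtain ⟨p0, hp0, hinf⟩ := Finset.exists_mem_eq_inf' hP g
        rw [hinf]
        exact hgpos p0 hp0
      · intro p hp
        rw [div_mul_cancel₀ _ (by positivity : ((n : ℝ) + 1) ≠ 0)]
        exact Finset.inf'_le g hp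
    · exact ⟨1, one_pos, fun p hp => absurd ⟨p, hp⟩ hP⟩
  set w : Fin n → ℝ := fun i => x i + y i + (if i ∈ Z then ε else 0) with hwdef
  have hwsum : ∀ A : Finset (Fin n), ∑ i ∈ A, w i
      = ∑ i ∈ A, x i + ∑ i ∈ A, y i + ε * ((A ∩ Z).card : ℝ) := by
    intro A
    rw [hwdef]
    simp only
    rw [Finset.sum_add_distrib, Finset.sum_add_distrib, Finset.sum_ite_mem,
      Finset.sum_const, nsmul_eq_mul, mul_comm]
  have hwpos : ∀ i, 0 < w i := by
    intro i
    rw [hwdef]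
    simp only
    by_cases hiZ : i ∈ Z
    · rw [if_pos hiZ]
      have h0 : x i + y i = 0 := (hZiff i).1 hiZ
      linarith
    · rw [if_neg hiZ]
      have h0 : x i + y i ≠ 0 := fun h => hiZ ((hZiff i).2 h)
      have h1 := hK5 i
      have h2 : 0 < x i + y i := lt_of_le_of_ne h1 (Ne.symm h0)
      linarith
  have hkey : ∀ F, F ∈ K → ∀ G, G ∉ K → ∑ i ∈ F, w i ≤ ∑ i ∈ G, w i := by
    intro F hF G hG
    rw [hwsum, hwsum]
    have h1 : ∑ i ∈ F, x i ≤ ∑ i ∈ Fᶜ, y i := hA _ hF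
    have h2 : ∑ i ∈ Gᶜ, y i ≤ ∑ i ∈ G, x i := hB _ hG
    have e1 := Finset.sum_add_sum_compl F y
    have e2 := Finset.sum_add_sum_compl G y
    rcases le_or_gt ((F ∩ Z).card) ((G ∩ Z).card) with hle | hlt
    · have h3 : ε * ((F ∩ Z).card : ℝ) ≤ ε * ((G ∩ Z).card : ℝ) :=
        mul_le_mul_of_nonneg_left (by exact_mod_cast hle) hε.le
      linarith
    · have hp : (F, G) ∈ P := by
        rw [hPdef]
        exact Finset.mem_filter.2 ⟨Finset.mem_univ _, hF, hG, hlt⟩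
      have hgp := hεgap _ hp
      rw [hgdef] at hgp
      simp only at hgp
      have hcF : ((F ∩ Z).card : ℝ) ≤ (n : ℝ) := by
        have h4 : (F ∩ Z).card ≤ n := by
          simpa using Finset.card_le_univ (F ∩ Z)
        exact_mod_cast h4
      have hcG : (0 : ℝ) ≤ ((G ∩ Z).card : ℝ) := Nat.cast_nonneg _
      have e3 : ε * ((F ∩ Z).card : ℝ) ≤ ε * (n : ℝ) :=
        mul_le_mul_of_nonneg_left hcF hε.le
      nlinarith [hε]
  set S : Finset (Finset (Fin n)) := Finset.univ.filter (fun G => G ∉ K) with hSdef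
  have hS : S.Nonempty :=
    ⟨Finset.univ, by rw [hSdef]; exact Finset.mem_filter.2 ⟨Finset.mem_univ _, huniv⟩⟩
  refine ⟨w, S.inf' hS (fun G => ∑ i ∈ G, w i), hwpos, ?_, ?_⟩
  · obtain ⟨G0, hG0, hinf⟩ := Finset.exists_mem_eq_inf' hS (fun G => ∑ i ∈ G, w i)
    rw [hinf]
    have hG0K : G0 ∉ K := by
      rw [hSdef] at hG0
      exact (Finset.mem_filter.1 hG0).2
    have hG0ne : G0.Nonempty := Finset.nonempty_iff_ne_empty.2 (fun h => hG0K (h ▸ hK.1))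
    exact Finset.sum_pos (fun i _ => hwpos i) hG0ne
  · intro X
    constructor
    · intro hq hX
      have hle : ∑ i ∈ X, w i ≤ S.inf' hS (fun G => ∑ i ∈ G, w i) := by
        apply Finset.le_inf'
        intro G hGS
        have : G ∉ K := by
          rw [hSdef] at hGS
          exact (Finset.mem_filter.1 hGS).2
        exact hkey X hX G this
      linarith
    · intro hq
      by_contra hX
      have hmem : X ∈ S := by
        rw [hSdef]
        exact Finset.mem_filter.2 ⟨Finset.mem_univ _, hX⟩
      have := Finset.inf'_le (fun G => ∑ i ∈ G, w i) hmem
      linarith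

end RWAux

/-- If a proper simplicial complex `K` on `[n]` without ghost
vertices admits a non-strict K-submodular function, then `K` is roughly
weighted with some strictly positive weights and positive quota. -/
theorem roughlyWeighted_of_nonStrictKSubmodular (n : ℕ) (K : Set (Finset (Fin n)))
    (hK : IsComplex n K) (hproper : K ≠ Set.univ) (hghost : NoGhost n K)
    (x y : Fin n → ℝ) (hxy : IsNonStrictKSubmodular n K x y) :
    ∃ (w : Fin n → ℝ) (q : ℝ), RoughlyWeighted n K w q := by
  classical
  have huniv : (Finset.univ : Finset (Fin n)) ∉ K := RWAux.univ_not_mem hK hproper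
  set Bd : ℝ := ∑ i : Fin n, (|x i| + |y i|) with hBddef
  have hBd0 : 0 ≤ Bd := Finset.sum_nonneg fun i _ => by positivity
  have habs : ∀ A : Finset (Fin n), ∑ i ∈ A, x i ≤ Bd := by
    intro A
    calc ∑ i ∈ A, x i ≤ ∑ i ∈ A, (|x i| + |y i|) := by
          apply Finset.sum_le_sum
          intro i _
          have h1 := le_abs_self (x i)
          have h2 := abs_nonneg (y i)
          linarith
      _ ≤ Bd := Finset.sum_le_sum_of_subset_of_nonneg (Finset.subset_univ A)
          (fun i _ _ => by positivity)
  have hyabs : ∀ c, |x c| + |y c| ≤ Bd := by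
    intro c
    exact Finset.single_le_sum (f := fun i => |x i| + |y i|)
      (fun i _ => by positivity) (Finset.mem_univ c)
  set y' : Fin n → ℝ :=
    fun i => y i + (if ({i} : Finset (Fin n))ᶜ ∈ K then 2 * Bd + 1 else 0) with hy'def
  have hy'ge : ∀ i, y i ≤ y' i := by
    intro i
    rw [hy'def]
    simp only
    split <;> linarith
  have hxy' : IsNonStrictKSubmodular n K x y' := by
    intro X1 c1 c2 h1 h2 h3 h4 h5
    obtain ⟨hL, hV, hX⟩ := hxy X1 c1 c2 h1 h2 h3 h4 h5
    have hsum : ∑ j ∈ (insert c1 (insert c2 X1))ᶜ, y' j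
        = ∑ j ∈ (insert c1 (insert c2 X1))ᶜ, y j := by
      apply Finset.sum_congr rfl
      intro j hj
      rw [hy'def]
      simp only
      rw [if_neg, add_zero]
      intro hjK
      apply h5
      apply hK.2 _ _ ?_ hjK
      intro a ha
      rw [Finset.mem_compl, Finset.mem_singleton]
      rintro rfl
      exact (Finset.mem_compl.1 hj) ha
    refine ⟨?_, ?_, ?_⟩
    · intro ha hb
      rw [hsum]
      exact hL ha hb
    · intro ha hb
      rw [hsum]
      have g1 := hV ha hb
      have g2 := hy'ge c1
      have g3 := hy'ge c2
      linarith
    · intro ha hb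
      obtain ⟨u1, u2⟩ := hX ha hb
      exact ⟨u1, lt_of_lt_of_le u2 (hy'ge c2)⟩
  have hD1 : ∀ c : Fin n, ({c} : Finset (Fin n))ᶜ ∈ K →
      ∑ i ∈ ({c} : Finset (Fin n))ᶜ, x i ≤ y' c := by
    intro c hcK
    rw [hy'def]
    simp only
    rw [if_pos hcK]
    have h1 := habs (({c} : Finset (Fin n))ᶜ)
    have h2 := hyabs c
    have h3 := neg_abs_le (y c)
    have h4 := abs_nonneg (x c)
    linarith
  have hD2 : ∀ c : Fin n, ({c} : Finset (Fin n))ᶜ ∈ K → 0 ≤ x c + y' c := by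
    intro c hcK
    rw [hy'def]
    simp only
    rw [if_pos hcK]
    have h2 := hyabs c
    have h3 := neg_abs_le (y c)
    have h4 := neg_abs_le (x c)
    linarith
  exact RWAux.main hK huniv hghost x y' hxy' hD1 hD2
end
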